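/- arXiv:math/9604233 — 9 statements merged into one kernel-verified Lean document; each statement's English description precedes it below -/
import Mathlib

section
/- The quadratic form a ↦ Σ_{j=1}^n a_j² / m_j on ℝⁿ is invariant under the transpose of R_i: for every a ∈ ℝⁿ, Σ_{j=1}^n (R_iᵀ a)_j² / m_j = Σ_{j=1}^n a_j² / m_j. -/
open Matrix

/-- The collision matrix `R_i` acting on coordinates `i` and `i+1` (0-based),
with 2×2 block `((γ, 1−γ), (1+γ, −γ))`, and agreeing with the identity elsewhere. -/
def collMat (n : ℕ) (i : ℕ) (γ : ℝ) : Matrix (Fin n) (Fin n) ℝ :=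
  Matrix.of fun j k =>
    if j.val = i ∧ k.val = i then γ
    else if j.val = i ∧ k.val = i + 1 then 1 - γ
    else if j.val = i + 1 ∧ k.val = i then 1 + γ
    else if j.val = i + 1 ∧ k.val = i + 1 then -γ
    else if j = k then 1 else 0

/-- A sum over a fintype of a function vanishing away from two points. -/
lemma sum_pair_aux {α : Type*} [Fintype α] [DecidableEq α] (f : α → ℝ) (x y : α)
    (hxy : x ≠ y) (h : ∀ z, z ≠ x → z ≠ y → f z = 0) : ∑ z, f z = f x + f y := by
  rw [← Finset.add_sum_erase _ f (Finset.mem_univ x),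
    ← Finset.add_sum_erase _ f (Finset.mem_erase.mpr ⟨hxy.symm, Finset.mem_univ y⟩)]
  rw [Finset.sum_eq_zero, add_zero]
  intro z hz
  simp only [Finset.mem_erase] at hz
  exact h z hz.2.1 hz.1

/-- the quadratic form `a ↦ ∑ j, a j ^ 2 / m j` is invariant under `R_iᵀ`. -/
theorem collMat_transpose_quadratic_invariant (n : ℕ) (hn : 2 ≤ n)
    (m : Fin n → ℝ) (hm : ∀ j, 0 < m j)
    (i : ℕ) (hi : i + 1 < n)
    (γ : ℝ)
    (hγ : γ = (m ⟨i, Nat.lt_of_succ_lt hi⟩ - m ⟨i + 1, hi⟩) /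
        (m ⟨i, Nat.lt_of_succ_lt hi⟩ + m ⟨i + 1, hi⟩)) :
    ∀ a : Fin n → ℝ,
      ∑ j, ((collMat n i γ)ᵀ *ᵥ a) j ^ 2 / m j = ∑ j, a j ^ 2 / m j := by
  intro a
  set i0 : Fin n := ⟨i, Nat.lt_of_succ_lt hi⟩ with hi0
  set i1 : Fin n := ⟨i + 1, hi⟩ with hi1
  have hne : i0 ≠ i1 := by simp [hi0, hi1, Fin.ext_iff]
  have key : ∀ j : Fin n, ((collMat n i γ)ᵀ *ᵥ a) j =
      if j = i0 then γ * a i0 + (1 + γ) * a i1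
      else if j = i1 then (1 - γ) * a i0 + (-γ) * a i1
      else a j := by
    intro j
    simp only [mulVec, dotProduct, transpose_apply, collMat, Matrix.of_apply]
    by_cases hj0 : j = i0
    · subst hj0
      rw [if_pos rfl]
      rw [sum_pair_aux _ i0 i1 hne]
      · have h1 : (i0 : Fin n).val = i := rfl
        have h2 : (i1 : Fin n).val = i + 1 := rfl
        simp [h1, h2]
      · intro z hz0 hz1
        have hz0' : (z : Fin n).val ≠ i := fun h => hz0 (Fin.ext h)
        have hz1' : (z : Fin n).val ≠ i + 1 := fun h => hz1 (Fin.ext h)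
        have hzj : z ≠ i0 := hz0
        simp [hz0', hz1', hzj]
    · by_cases hj1 : j = i1
      · subst hj1
        rw [if_neg hj0, if_pos rfl]
        rw [sum_pair_aux _ i0 i1 hne]
        · have h1 : (i0 : Fin n).val = i := rfl
          have h2 : (i1 : Fin n).val = i + 1 := rfl
          have h3 : i ≠ i + 1 := by omega
          simp [h1, h2, h3, hne]
        · intro z hz0 hz1
          have hz0' : (z : Fin n).val ≠ i := fun h => hz0 (Fin.ext h)
          have hz1' : (z : Fin n).val ≠ i + 1 := fun h => hz1 (Fin.ext h)
          simp [hz0', hz1', hz1]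
      · rw [if_neg hj0, if_neg hj1]
        have hjv0 : (j : Fin n).val ≠ i := fun h => hj0 (Fin.ext h)
        have hjv1 : (j : Fin n).val ≠ i + 1 := fun h => hj1 (Fin.ext h)
        rw [Finset.sum_eq_single j]
        · simp [hjv0, hjv1]
        · intro k _ hk
          have hk' : k ≠ j := hk
          by_cases hk0 : (k : Fin n).val = i
          · simp [hk0, hjv0, hjv1, hk']
          · by_cases hk1 : (k : Fin n).val = i + 1
            · simp [hk0, hk1, hjv0, hjv1, hk']
            · simp [hk0, hk1, hk']
        · intro h
          exact absurd (Finset.mem_univ j) h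
  rw [← sub_eq_zero, ← Finset.sum_sub_distrib]
  rw [sum_pair_aux _ i0 i1 hne]
  · rw [key i0, key i1, if_pos rfl, if_neg hne.symm, if_pos rfl]
    have hm0 := hm i0
    have hm1 := hm i1
    have hs : m i0 + m i1 ≠ 0 := by positivity
    subst hγ
    field_simp
    ring
  · intro z hz0 hz1
    rw [key z, if_neg hz0, if_neg hz1, sub_self]
end

section
/- Given a neutral trajectory datum, the function t ↦ Σ_{j=1}^n δh_j(t)² / m_j is constant on [0, ∞). -/
open Matrix Filter Set

section Helpers

lemma quad_alg (a b x y : ℝ) (ha : 0 < a) (hb : 0 < b) :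
    ((a-b)/(a+b) * x + (1 + (a-b)/(a+b)) * y) ^ 2 / a
      + ((1 - (a-b)/(a+b)) * x + (-((a-b)/(a+b))) * y) ^ 2 / b
    = x ^ 2 / a + y ^ 2 / b := by
  have hab : a + b ≠ 0 := by positivity
  field_simp
  ring

lemma collMat_T_mulVec (n i : ℕ) (hi : i + 1 < n) (γ : ℝ) (w : Fin n → ℝ) (j : Fin n) :
    ((collMat n i γ)ᵀ *ᵥ w) j =
      if j.val = i then γ * w ⟨i, Nat.lt_of_succ_lt hi⟩ + (1 + γ) * w ⟨i+1, hi⟩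
      else if j.val = i + 1 then (1 - γ) * w ⟨i, Nat.lt_of_succ_lt hi⟩ + (-γ) * w ⟨i+1, hi⟩
      else w j := by
  have hil : i < n := Nat.lt_of_succ_lt hi
  set i0 : Fin n := ⟨i, hil⟩ with hi0
  set i1 : Fin n := ⟨i+1, hi⟩ with hi1
  have hne : i1 ≠ i0 := by simp [hi0, hi1, Fin.ext_iff]
  have hsum : ∀ f : Fin n → ℝ, (∀ k, k ≠ i0 → k ≠ i1 → f k = 0) →
      ∑ k, f k = f i0 + f i1 := by
    intro f hf
    rw [← Finset.add_sum_erase _ f (Finset.mem_univ i0),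
      ← Finset.add_sum_erase _ f (Finset.mem_erase.2 ⟨hne, Finset.mem_univ i1⟩)]
    rw [Finset.sum_eq_zero, add_zero]
    intro k hk
    simp only [Finset.mem_erase] at hk
    exact hf k hk.2.1 hk.1
  have e00 : collMat n i γ i0 i0 = γ := by
    simp only [collMat, Matrix.of_apply, hi0]
    rw [if_pos (by simp)]
  have e10 : collMat n i γ i1 i0 = 1 + γ := by
    simp only [collMat, Matrix.of_apply, hi0, hi1]
    rw [if_neg (by simp), if_neg (by simp), if_pos (by simp)]
  have e01 : collMat n i γ i0 i1 = 1 - γ := by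
    simp only [collMat, Matrix.of_apply, hi0, hi1]
    rw [if_neg (by simp), if_pos (by simp)]
  have e11 : collMat n i γ i1 i1 = -γ := by
    simp only [collMat, Matrix.of_apply, hi1]
    rw [if_neg (by simp), if_neg (by simp), if_neg (by simp), if_pos (by simp)]
  have ezero : ∀ k l : Fin n, k ≠ i0 → k ≠ i1 → k ≠ l → (l = i0 ∨ l = i1) →
      collMat n i γ k l = 0 := by
    intro k l hk0 hk1 hkl hl
    have h0 : ¬ (k.val = i) := fun h => hk0 (Fin.ext h)
    have h1 : ¬ (k.val = i + 1) := fun h => hk1 (Fin.ext h)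
    simp only [collMat, Matrix.of_apply]
    rw [if_neg (by tauto), if_neg (by tauto), if_neg (by tauto), if_neg (by tauto),
      if_neg hkl]
  show ∑ k, collMat n i γ k j * w k = _
  by_cases hj0 : j = i0
  · subst hj0
    rw [if_pos rfl]
    rw [hsum _ (fun k hk0 hk1 => by
      rw [ezero k i0 hk0 hk1 hk0 (Or.inl rfl), zero_mul])]
    rw [e00, e10]
  · by_cases hj1 : j = i1
    · subst hj1
      rw [if_neg (by simp [hi1]), if_pos rfl]
      rw [hsum _ (fun k hk0 hk1 => by
        rw [ezero k i1 hk0 hk1 hk1 (Or.inr rfl), zero_mul])]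
      rw [e01, e11]
    · have h0 : ¬ (j.val = i) := fun h => hj0 (Fin.ext h)
      have h1 : ¬ (j.val = i + 1) := fun h => hj1 (Fin.ext h)
      rw [if_neg h0, if_neg h1]
      rw [Finset.sum_eq_single j]
      · simp [collMat, h0, h1]
      · intro k _ hk
        by_cases hk0 : k.val = i
        · simp [collMat, hk0, h0, h1, hk]
        · by_cases hk1 : k.val = i + 1
          · simp [collMat, hk0, hk1, h0, h1, hk]
          · simp [collMat, hk0, hk1, hk]
      · simp

lemma collMat_quad (n i : ℕ) (hi : i + 1 < n) (m : Fin n → ℝ) (hm : ∀ j, 0 < m j)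
    (w : Fin n → ℝ) :
    ∑ j, (((collMat n i ((m ⟨i, Nat.lt_of_succ_lt hi⟩ - m ⟨i+1, hi⟩) /
        (m ⟨i, Nat.lt_of_succ_lt hi⟩ + m ⟨i+1, hi⟩)))ᵀ *ᵥ w) j) ^ 2 / m j
      = ∑ j, (w j) ^ 2 / m j := by
  have hil : i < n := Nat.lt_of_succ_lt hi
  set i0 : Fin n := ⟨i, hil⟩ with hi0
  set i1 : Fin n := ⟨i+1, hi⟩ with hi1
  set γ : ℝ := (m i0 - m i1) / (m i0 + m i1) with hγ
  have hne : i1 ≠ i0 := by simp [hi0, hi1, Fin.ext_iff]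
  have split : ∀ f : Fin n → ℝ,
      ∑ j, f j = f i0 + f i1 + ∑ j ∈ (Finset.univ.erase i0).erase i1, f j := by
    intro f
    rw [← Finset.add_sum_erase _ f (Finset.mem_univ i0),
      ← Finset.add_sum_erase _ f (Finset.mem_erase.2 ⟨hne, Finset.mem_univ i1⟩)]
    ring
  set u : Fin n → ℝ := (collMat n i γ)ᵀ *ᵥ w with hu
  have hui0 : u i0 = γ * w i0 + (1 + γ) * w i1 := by
    rw [hu, collMat_T_mulVec n i hi, if_pos rfl]
  have hui1 : u i1 = (1 - γ) * w i0 + (-γ) * w i1 := by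
    rw [hu, collMat_T_mulVec n i hi, if_neg (by simp [hi1]), if_pos rfl]
  have hrest : ∀ j : Fin n, j ≠ i0 → j ≠ i1 → u j = w j := by
    intro j hj0 hj1
    rw [hu, collMat_T_mulVec n i hi, if_neg (fun h => hj0 (Fin.ext h)),
      if_neg (fun h => hj1 (Fin.ext h))]
  rw [split (fun j => u j ^ 2 / m j), split (fun j => w j ^ 2 / m j)]
  have hrs : ∑ j ∈ (Finset.univ.erase i0).erase i1, u j ^ 2 / m j
      = ∑ j ∈ (Finset.univ.erase i0).erase i1, w j ^ 2 / m j := by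
    apply Finset.sum_congr rfl
    intro j hj
    simp only [Finset.mem_erase] at hj
    rw [hrest j hj.2.1 hj.1]
  rw [hrs, hui0, hui1, hγ]
  have := quad_alg (m i0) (m i1) (w i0) (w i1) (hm i0) (hm i1)
  linarith [this]

lemma const_on_gap {f : ℝ → ℝ} {a b : ℝ} (ha : 0 ≤ a) (hab : a < b)
    (hderiv : ∀ t, a < t → t < b → HasDerivWithinAt f 0 (Ici 0) t)
    (hrc : Tendsto f (nhdsWithin a (Ici a)) (nhds (f a))) :
    ∀ t, a ≤ t → t < b → f t = f a := by
  have hda : ∀ t, a < t → t < b → HasDerivAt f 0 t := by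
    intro t h1 h2
    exact (hderiv t h1 h2).hasDerivAt (Ici_mem_nhds (by linarith))
  have st1 : ∀ x y, a < x → x ≤ y → y < b → f y = f x := by
    intro x y h1 h2 h3
    have hcont : ContinuousOn f (Icc x y) := fun t ht =>
      ((hda t (lt_of_lt_of_le h1 ht.1) (lt_of_le_of_lt ht.2 h3)).continuousAt).continuousWithinAt
    have hd : ∀ t ∈ Ico x y, HasDerivWithinAt f 0 (Ici t) t := fun t ht =>
      (hda t (lt_of_lt_of_le h1 ht.1) (lt_trans ht.2 h3)).hasDerivWithinAt
    exact constant_of_has_deriv_right_zero hcont hd y ⟨h2, le_refl y⟩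
  intro t h1 h2
  rcases eq_or_lt_of_le h1 with h | h
  · rw [← h]
  · have hmem : Ioo a t ∈ nhdsWithin a (Ioi a) := Ioo_mem_nhdsGT_of_mem ⟨le_refl a, h⟩
    have h1' : Tendsto f (nhdsWithin a (Ioi a)) (nhds (f a)) :=
      hrc.mono_left (nhdsWithin_mono _ Ioi_subset_Ici_self)
    have h2' : Tendsto f (nhdsWithin a (Ioi a)) (nhds (f t)) := by
      apply Tendsto.congr' _ (tendsto_const_nhds (α := ℝ) (x := f t))
      filter_upwards [hmem] with s hs
      exact st1 s t hs.1 hs.2.le h2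
    exact tendsto_nhds_unique h2' h1'

lemma leftlim_eq {f : ℝ → ℝ} {a b L c : ℝ} (hab : a < b)
    (hconst : ∀ s, a < s → s < b → f s = c)
    (hll : Tendsto f (nhdsWithin b (Iio b)) (nhds L)) : L = c := by
  have hmem : Ioo a b ∈ nhdsWithin b (Iio b) := Ioo_mem_nhdsLT_of_mem ⟨hab, le_refl b⟩
  have h2' : Tendsto f (nhdsWithin b (Iio b)) (nhds c) := by
    apply Tendsto.congr' _ (tendsto_const_nhds (α := ℝ) (x := c))
    filter_upwards [hmem] with s hs
    exact (hconst s hs.1 hs.2).symm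
  exact tendsto_nhds_unique hll h2'

end Helpers

/-- A neutral trajectory datum for the falling-ball system with `n ≥ 2` particles of
positive masses `m`: a strictly increasing sequence of collision times `0 < t_1 < t_2 < ⋯`
tending to `∞`, collision types `ty k ∈ {0, 1, …, n−1}` (where `ty k = 0` is a floor
collision and `ty k = i + 1` is a collision of the 0-based particles `i` and `i + 1`),
a bound `C > 0`, and functions `q, v, δh : [0, ∞) → ℝⁿ` satisfying conditions
(a)–(f) of the paper.  The fields `vminus k`, `dhminus k` record the left limits
`v(t_k⁻)`, `δh(t_k⁻)`. -/
structure NeutralDatum (n : ℕ) (m : Fin n → ℝ) : Type where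
  hn : 2 ≤ n
  hm : ∀ j, 0 < m j
  /-- collision times (0-indexed: `tc 0` is the paper's `t_1`) -/
  tc : ℕ → ℝ
  /-- collision types -/
  ty : ℕ → ℕ
  C : ℝ
  q : ℝ → Fin n → ℝ
  v : ℝ → Fin n → ℝ
  dh : ℝ → Fin n → ℝ
  /-- the left limit `v(t_k⁻)` -/
  vminus : ℕ → Fin n → ℝ
  /-- the left limit `δh(t_k⁻)` -/
  dhminus : ℕ → Fin n → ℝ
  tc_pos : 0 < tc 0
  tc_mono : StrictMono tc
  tc_tendsto : Tendsto tc atTop atTop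
  ty_lt : ∀ k, ty k < n
  C_pos : 0 < C
  /-- (a) `q` is continuous on `[0, ∞)` -/
  q_cont : ∀ j, ContinuousOn (fun t => q t j) (Ici 0)
  /-- (a) `0 ≤ q_j(t) ≤ C` -/
  q_bdd : ∀ j, ∀ t, 0 ≤ t → 0 ≤ q t j ∧ q t j ≤ C
  /-- (b) between collisions, `q' = v` -/
  q_deriv : ∀ t, 0 ≤ t → t ∉ range tc → ∀ j,
    HasDerivWithinAt (fun s => q s j) (v t j) (Ici 0) t
  /-- (b) between collisions, `v' = -1` componentwise -/
  v_deriv : ∀ t, 0 ≤ t → t ∉ range tc → ∀ j,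
    HasDerivWithinAt (fun s => v s j) (-1) (Ici 0) t
  /-- (b) between collisions, `δh` is constant -/
  dh_deriv : ∀ t, 0 ≤ t → t ∉ range tc → ∀ j,
    HasDerivWithinAt (fun s => dh s j) 0 (Ici 0) t
  /-- (c) `v` is right-continuous -/
  v_rc : ∀ t, 0 ≤ t → ∀ j, Tendsto (fun s => v s j) (nhdsWithin t (Ici t)) (nhds (v t j))
  /-- (c) `δh` is right-continuous -/
  dh_rc : ∀ t, 0 ≤ t → ∀ j, Tendsto (fun s => dh s j) (nhdsWithin t (Ici t)) (nhds (dh t j))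
  /-- (c) `v` has left limit `vminus k` at `tc k` -/
  v_ll : ∀ k j, Tendsto (fun s => v s j) (nhdsWithin (tc k) (Iio (tc k))) (nhds (vminus k j))
  /-- (c) `δh` has left limit `dhminus k` at `tc k` -/
  dh_ll : ∀ k j, Tendsto (fun s => dh s j) (nhdsWithin (tc k) (Iio (tc k))) (nhds (dhminus k j))
  /-- (d) collision of particles `i`, `i+1` (0-based): `q_i = q_{i+1}`,
  `v⁺ = R_i v⁻` and `δh⁺ = R_iᵀ δh⁻` -/
  coll_pair : ∀ k, ∀ i : ℕ, ∀ hi : i + 1 < n, ty k = i + 1 →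
    q (tc k) ⟨i, Nat.lt_of_succ_lt hi⟩ = q (tc k) ⟨i + 1, hi⟩ ∧
    v (tc k) = (collMat n i ((m ⟨i, Nat.lt_of_succ_lt hi⟩ - m ⟨i + 1, hi⟩) /
        (m ⟨i, Nat.lt_of_succ_lt hi⟩ + m ⟨i + 1, hi⟩))) *ᵥ vminus k ∧
    dh (tc k) = (collMat n i ((m ⟨i, Nat.lt_of_succ_lt hi⟩ - m ⟨i + 1, hi⟩) /
        (m ⟨i, Nat.lt_of_succ_lt hi⟩ + m ⟨i + 1, hi⟩)))ᵀ *ᵥ dhminus k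
  /-- (e) floor collision: `q_1 = 0`, `v_1⁺ = -v_1⁻`, the other velocities are
  unchanged, `δh⁺ = δh⁻` and `δh_1 = 0` -/
  coll_floor : ∀ k, ty k = 0 →
    q (tc k) ⟨0, by omega⟩ = 0 ∧
    v (tc k) ⟨0, by omega⟩ = -vminus k ⟨0, by omega⟩ ∧
    (∀ j : Fin n, j ≠ ⟨0, by omega⟩ → v (tc k) j = vminus k j) ∧
    dh (tc k) = dhminus k ∧
    dh (tc k) ⟨0, by omega⟩ = 0
  /-- (f) `∑ j, δh_j(t) = 0` -/
  dh_sum : ∀ t, 0 ≤ t → ∑ j, dh t j = 0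

/-- given a neutral trajectory datum, the function
`t ↦ ∑ j, δh_j(t)² / m_j` is constant on `[0, ∞)`. -/
theorem neutral_quadratic_constant (n : ℕ) (m : Fin n → ℝ) (D : NeutralDatum n m) :
    ∀ t s : ℝ, 0 ≤ t → 0 ≤ s →
      ∑ j, (D.dh t j) ^ 2 / m j = ∑ j, (D.dh s j) ^ 2 / m j := by
  set F : ℝ → ℝ := fun t => ∑ j, (D.dh t j) ^ 2 / m j with hF
  suffices h : ∀ t, 0 ≤ t → F t = F 0 by
    intro t s ht hs
    rw [show (∑ j, (D.dh t j) ^ 2 / m j) = F t from rfl,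
      show (∑ j, (D.dh s j) ^ 2 / m j) = F s from rfl, h t ht, h s hs]
  -- left endpoints of the gaps
  set lep : ℕ → ℝ := fun k => Nat.casesOn k 0 (fun k' => D.tc k') with hlep
  have tc_nonneg : ∀ k, 0 ≤ D.tc k := fun k =>
    le_of_lt (lt_of_lt_of_le D.tc_pos (D.tc_mono.monotone (Nat.zero_le k)))
  have lep_nonneg : ∀ k, 0 ≤ lep k := by
    intro k; cases k with
    | zero => exact le_refl 0
    | succ k' => exact tc_nonneg k'
  have lep_lt : ∀ k, lep k < D.tc k := by
    intro k; cases k with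
    | zero => exact D.tc_pos
    | succ k' => exact D.tc_mono (Nat.lt_succ_self k')
  have gapfree : ∀ k s, lep k < s → s < D.tc k → s ∉ range D.tc := by
    intro k s h1 h2 hmem
    obtain ⟨j, hj⟩ := hmem
    cases k with
    | zero =>
      have : D.tc 0 ≤ D.tc j := D.tc_mono.monotone (Nat.zero_le j)
      rw [hj] at this; linarith
    | succ k' =>
      rcases le_or_gt j k' with hle | hlt
      · have : D.tc j ≤ D.tc k' := D.tc_mono.monotone hle
        rw [hj] at this; linarith
      · have : D.tc (k' + 1) ≤ D.tc j := D.tc_mono.monotone hlt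
        rw [hj] at this; linarith
  -- dh is constant on each gap
  have Hconst : ∀ k j t, lep k ≤ t → t < D.tc k → D.dh t j = D.dh (lep k) j := by
    intro k j
    exact const_on_gap (lep_nonneg k) (lep_lt k)
      (fun t h1 h2 => D.dh_deriv t (le_trans (lep_nonneg k) h1.le)
        (gapfree k t h1 h2) j)
      (D.dh_rc (lep k) (lep_nonneg k) j)
  -- left limits agree with the gap value
  have Hminus : ∀ k j, D.dhminus k j = D.dh (lep k) j := by
    intro k j
    exact leftlim_eq (lep_lt k)
      (fun s h1 h2 => Hconst k j s h1.le h2) (D.dh_ll k j)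
  -- the quadratic form is unchanged across each collision
  have Hcoll : ∀ k, F (D.tc k) = ∑ j, (D.dhminus k j) ^ 2 / m j := by
    intro k
    cases h : D.ty k with
    | zero =>
      have := (D.coll_floor k h).2.2.2.1
      rw [hF]; simp only []
      rw [this]
    | succ i =>
      have hi : i + 1 < n := by have := D.ty_lt k; omega
      have hdh := (D.coll_pair k i hi h).2.2
      rw [hF]; simp only []
      rw [hdh]
      exact collMat_quad n i hi m D.hm (D.dhminus k)
  have Hgap : ∀ k t, lep k ≤ t → t < D.tc k → F t = F (lep k) := by
    intro k t h1 h2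
    apply Finset.sum_congr rfl
    intro j _
    rw [Hconst k j t h1 h2]
  have Htc0 : ∀ k, F (D.tc k) = F (lep k) := by
    intro k
    rw [Hcoll k]
    apply Finset.sum_congr rfl
    intro j _
    rw [Hminus k j]
  have Htc : ∀ k, F (D.tc k) = F 0 := by
    intro k
    induction k with
    | zero => exact Htc0 0
    | succ k' ih => rw [Htc0 (k' + 1)]; exact ih
  have Hlt : ∀ k t, 0 ≤ t → t < D.tc k → F t = F 0 := by
    intro k
    induction k with
    | zero => intro t ht h2; exact Hgap 0 t ht h2
    | succ k' ih =>
      intro t ht h2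
      rcases lt_or_ge t (D.tc k') with h | h
      · exact ih t ht h
      · rw [Hgap (k' + 1) t h h2]
        exact Htc k'
  intro t ht
  obtain ⟨k, hk⟩ := (D.tc_tendsto.eventually_gt_atTop t).exists
  exact Hlt k t ht hk
end

section
/- Given a neutral trajectory datum, the function w(t) = Σ_{j=1}^n q_j(t) δh_j(t) is affine in t on all of [0, ∞): for every t ≥ 0, w(t) = w(0) + t · Σ_{j=1}^n δh_j(0) v_j(0). In particular the slope Σ_{j=1}^n δh_j(t) v_j(t) is the same on every inter-collision interval. -/
open Matrix Filter Set

/-!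
Between collisions `δh` is constant and `v' = -1`, so `(δh ⬝ᵥ v)' = -∑ j, δh_j = 0`, and
`(q ⬝ᵥ δh)' = δh ⬝ᵥ v`. Neither pairing jumps at a collision: `Rᵢ` is an involution, so
`Rᵢᵀ δh ⬝ᵥ Rᵢ v = δh ⬝ᵥ v`, and it fixes `q` because `q_i = q_{i+1}`, so `q ⬝ᵥ Rᵢᵀ δh = q ⬝ᵥ δh`;
at the floor `δh` does not jump and `δh_1 = 0` hides the sign flip of `v_1`. Both pairings are
therefore continuous on `[0, ∞)` and differentiable off the countable set of collision times,
and the fundamental theorem of calculus with a countable exceptional set integrates them.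
-/

open Topology

section collMat

variable {n i : ℕ} (hi : i + 1 < n) (γ : ℝ)

include hi in
theorem collMat_mulVec_apply (y : Fin n → ℝ) (k : Fin n) :
    (collMat n i γ *ᵥ y) k =
      if k.val = i then γ * y ⟨i, by omega⟩ + (1 - γ) * y ⟨i + 1, hi⟩
      else if k.val = i + 1 then (1 + γ) * y ⟨i, by omega⟩ - γ * y ⟨i + 1, hi⟩
      else y k := by
  have hne : (⟨i, by omega⟩ : Fin n) ≠ ⟨i + 1, hi⟩ := by simp [Fin.ext_iff]
  simp only [mulVec, dotProduct]
  split_ifs with h1 h2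
  · rw [Fintype.sum_eq_add _ _ hne]
    · simp [collMat, h1]
    · rintro j ⟨hj1, hj2⟩
      simp only [ne_eq, Fin.ext_iff] at hj1 hj2
      simp [collMat, hj1, hj2, h1, Fin.ext_iff, Ne.symm hj1]
  · rw [Fintype.sum_eq_add _ _ hne]
    · simp [collMat, h2]; ring
    · rintro j ⟨hj1, hj2⟩
      simp only [ne_eq, Fin.ext_iff] at hj1 hj2
      simp [collMat, hj1, hj2, h2, Fin.ext_iff, Ne.symm hj2]
  · rw [Fintype.sum_eq_single k]
    · simp [collMat, h1, h2]
    · intro j hj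
      simp [collMat, h1, h2, Ne.symm hj]

include hi in
theorem collMat_mulVec_involutive : Function.Involutive (collMat n i γ *ᵥ ·) := by
  intro y
  ext k
  simp only [collMat_mulVec_apply hi, if_neg (Nat.succ_ne_self i)]
  split_ifs with h1 h2
  · rw [show k = ⟨i, by omega⟩ from Fin.ext h1]; ring
  · rw [show k = ⟨i + 1, hi⟩ from Fin.ext h2]; ring
  · rfl

include hi in
theorem collMat_mulVec_of_eq {y : Fin n → ℝ} (hy : y ⟨i, by omega⟩ = y ⟨i + 1, hi⟩) :
    collMat n i γ *ᵥ y = y := by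
  ext k
  rw [collMat_mulVec_apply hi]
  split_ifs with h1 h2
  · rw [show k = ⟨i, by omega⟩ from Fin.ext h1, hy]; ring
  · rw [show k = ⟨i + 1, hi⟩ from Fin.ext h2, hy]; ring
  · rfl

include hi in
theorem transpose_collMat_mulVec_dotProduct_collMat_mulVec (x y : Fin n → ℝ) :
    (collMat n i γ)ᵀ *ᵥ x ⬝ᵥ collMat n i γ *ᵥ y = x ⬝ᵥ y := by
  rw [mulVec_transpose, ← dotProduct_mulVec]
  exact congrArg (x ⬝ᵥ ·) (collMat_mulVec_involutive hi γ y)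

include hi in
theorem dotProduct_transpose_collMat_mulVec_of_eq {y : Fin n → ℝ}
    (hy : y ⟨i, by omega⟩ = y ⟨i + 1, hi⟩) (x : Fin n → ℝ) :
    y ⬝ᵥ (collMat n i γ)ᵀ *ᵥ x = y ⬝ᵥ x := by
  rw [dotProduct_mulVec, vecMul_transpose, collMat_mulVec_of_eq hi γ hy]

end collMat

section OneSided

variable {E : Type*} [NormedAddCommGroup E] [NormedSpace ℝ E] {f : ℝ → E} {a : ℝ} {s : Set ℝ}

theorem continuousOn_Ici_of_hasDerivAt_off {f' : ℝ → E}
    (hd : ∀ x ∈ Ioi a \ s, HasDerivAt f (f' x) x)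
    (hr : ∀ x ∈ Ici a, ContinuousWithinAt f (Ici x) x)
    (hl : ∀ x ∈ s, ContinuousWithinAt f (Iio x) x) :
    ContinuousOn f (Ici a) := by
  intro x hx
  rcases (mem_Ici.1 hx).eq_or_lt with rfl | hax
  · exact hr a hx
  by_cases hxs : x ∈ s
  · exact (continuousAt_iff_continuous_left_right.2
      ⟨continuousWithinAt_Iio_iff_Iic.1 (hl x hxs), hr x hx⟩).continuousWithinAt
  · exact (hd x ⟨hax, hxs⟩).continuousAt.continuousWithinAt

theorem eq_add_smul_of_hasDerivAt_off_countable [CompleteSpace E] {c : E} (hs : s.Countable)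
    (hf : ContinuousOn f (Ici a)) (hd : ∀ x ∈ Ioi a \ s, HasDerivAt f c x) {t : ℝ}
    (ht : a ≤ t) : f t = f a + (t - a) • c := by
  have hftc := MeasureTheory.integral_eq_of_hasDerivAt_off_countable_of_le f (fun _ ↦ c) ht hs
    (hf.mono Icc_subset_Ici_self) (fun x hx ↦ hd x ⟨hx.1.1, hx.2⟩) intervalIntegrable_const
  rw [intervalIntegral.integral_const] at hftc
  rw [hftc, add_sub_cancel]

end OneSided

theorem tendsto_dotProduct {ι α R : Type*} [Fintype ι] [TopologicalSpace R]
    [NonUnitalNonAssocSemiring R] [IsTopologicalSemiring R] {l : Filter α} {x y : α → ι → R}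
    {a b : ι → R} (hx : ∀ j, Tendsto (fun s ↦ x s j) l (𝓝 (a j)))
    (hy : ∀ j, Tendsto (fun s ↦ y s j) l (𝓝 (b j))) :
    Tendsto (fun s ↦ x s ⬝ᵥ y s) l (𝓝 (a ⬝ᵥ b)) :=
  tendsto_finsetSum _ fun j _ ↦ (hx j).mul (hy j)

theorem hasDerivAt_dotProduct {ι 𝕜 : Type*} [Fintype ι] [NontriviallyNormedField 𝕜]
    {x y : 𝕜 → ι → 𝕜} {x' y' : ι → 𝕜} {t : 𝕜} (hx : ∀ j, HasDerivAt (fun s ↦ x s j) (x' j) t)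
    (hy : ∀ j, HasDerivAt (fun s ↦ y s j) (y' j) t) :
    HasDerivAt (fun s ↦ x s ⬝ᵥ y s) (x' ⬝ᵥ y t + x t ⬝ᵥ y') t := by
  simp only [dotProduct, ← Finset.sum_add_distrib]
  exact HasDerivAt.fun_sum fun j _ ↦ (hx j).mul (hy j)

namespace NeutralDatum

variable {n : ℕ} {m : Fin n → ℝ} (D : NeutralDatum n m)

theorem zero_lt_tc (k : ℕ) : 0 < D.tc k :=
  D.tc_pos.trans_le (D.tc_mono.monotone k.zero_le)

theorem dh_dotProduct_v_tc (k : ℕ) :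
    D.dh (D.tc k) ⬝ᵥ D.v (D.tc k) = D.dhminus k ⬝ᵥ D.vminus k := by
  rcases hty : D.ty k with _ | i
  · obtain ⟨-, -, hv, hdh, hdh₀⟩ := D.coll_floor k hty
    rw [hdh] at hdh₀ ⊢
    refine Finset.sum_congr rfl fun j _ ↦ ?_
    by_cases hj : j = ⟨0, by have := D.hn; omega⟩
    · rw [hj, hdh₀, zero_mul, zero_mul]
    · rw [hv j hj]
  · have hi : i + 1 < n := hty ▸ D.ty_lt k
    obtain ⟨-, hv, hdh⟩ := D.coll_pair k i hi hty
    rw [hdh, hv, transpose_collMat_mulVec_dotProduct_collMat_mulVec hi]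

theorem q_dotProduct_dh_tc (k : ℕ) :
    D.q (D.tc k) ⬝ᵥ D.dh (D.tc k) = D.q (D.tc k) ⬝ᵥ D.dhminus k := by
  rcases hty : D.ty k with _ | i
  · rw [(D.coll_floor k hty).2.2.2.1]
  · have hi : i + 1 < n := hty ▸ D.ty_lt k
    obtain ⟨hq, -, hdh⟩ := D.coll_pair k i hi hty
    rw [hdh, dotProduct_transpose_collMat_mulVec_of_eq hi _ hq]

theorem dh_dotProduct_v_eq {t : ℝ} (ht : 0 ≤ t) :
    D.dh t ⬝ᵥ D.v t = D.dh 0 ⬝ᵥ D.v 0 := by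
  have hd : ∀ x ∈ Ioi 0 \ range D.tc, HasDerivAt (fun s ↦ D.dh s ⬝ᵥ D.v s) 0 x := by
    rintro x ⟨hx, hxc⟩
    have := hasDerivAt_dotProduct (x' := 0) (y' := -1)
      (fun j ↦ (D.dh_deriv x hx.le hxc j).hasDerivAt (Ici_mem_nhds hx))
      (fun j ↦ (D.v_deriv x hx.le hxc j).hasDerivAt (Ici_mem_nhds hx))
    rwa [zero_dotProduct, zero_add, dotProduct_neg, dotProduct_one, D.dh_sum x hx.le,
      neg_zero] at this
  have hr : ∀ x ∈ Ici (0 : ℝ), ContinuousWithinAt (fun s ↦ D.dh s ⬝ᵥ D.v s) (Ici x) x :=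
    fun x hx ↦ tendsto_dotProduct (D.dh_rc x hx) (D.v_rc x hx)
  have hl : ∀ x ∈ range D.tc, ContinuousWithinAt (fun s ↦ D.dh s ⬝ᵥ D.v s) (Iio x) x := by
    rintro _ ⟨k, rfl⟩
    rw [ContinuousWithinAt, dh_dotProduct_v_tc]
    exact tendsto_dotProduct (D.dh_ll k) (D.v_ll k)
  simpa using eq_add_smul_of_hasDerivAt_off_countable (countable_range D.tc)
    (continuousOn_Ici_of_hasDerivAt_off hd hr hl) hd ht

theorem q_dotProduct_dh_eq {t : ℝ} (ht : 0 ≤ t) :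
    D.q t ⬝ᵥ D.dh t = D.q 0 ⬝ᵥ D.dh 0 + t * (D.dh 0 ⬝ᵥ D.v 0) := by
  have hd : ∀ x ∈ Ioi 0 \ range D.tc,
      HasDerivAt (fun s ↦ D.q s ⬝ᵥ D.dh s) (D.dh 0 ⬝ᵥ D.v 0) x := by
    rintro x ⟨hx, hxc⟩
    have := hasDerivAt_dotProduct (y' := 0)
      (fun j ↦ (D.q_deriv x hx.le hxc j).hasDerivAt (Ici_mem_nhds hx))
      (fun j ↦ (D.dh_deriv x hx.le hxc j).hasDerivAt (Ici_mem_nhds hx))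
    rwa [dotProduct_zero, add_zero, dotProduct_comm, D.dh_dotProduct_v_eq hx.le] at this
  have hr : ∀ x ∈ Ici (0 : ℝ), ContinuousWithinAt (fun s ↦ D.q s ⬝ᵥ D.dh s) (Ici x) x :=
    fun x hx ↦ tendsto_dotProduct (fun j ↦ (D.q_cont j x hx).mono (Ici_subset_Ici.2 hx))
      (D.dh_rc x hx)
  have hl : ∀ x ∈ range D.tc, ContinuousWithinAt (fun s ↦ D.q s ⬝ᵥ D.dh s) (Iio x) x := by
    rintro _ ⟨k, rfl⟩
    rw [ContinuousWithinAt, q_dotProduct_dh_tc]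
    exact tendsto_dotProduct
      (fun j ↦ ((D.q_cont j).continuousAt (Ici_mem_nhds (D.zero_lt_tc k))).continuousWithinAt)
      (D.dh_ll k)
  simpa using eq_add_smul_of_hasDerivAt_off_countable (countable_range D.tc)
    (continuousOn_Ici_of_hasDerivAt_off hd hr hl) hd ht

end NeutralDatum

/-- given a neutral trajectory datum, `w(t) = ∑ j, q_j(t) δh_j(t)` is affine
in `t` on `[0, ∞)`: `w(t) = w(0) + t * ∑ j, δh_j(0) v_j(0)`.  In particular the slope
`∑ j, δh_j(t) v_j(t)` is the same on every inter-collision interval. -/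
theorem neutral_w_affine (n : ℕ) (m : Fin n → ℝ) (D : NeutralDatum n m) :
    (∀ t : ℝ, 0 ≤ t →
      ∑ j, D.q t j * D.dh t j =
        (∑ j, D.q 0 j * D.dh 0 j) + t * ∑ j, D.dh 0 j * D.v 0 j) ∧
    ∀ t : ℝ, 0 ≤ t → ∑ j, D.dh t j * D.v t j = ∑ j, D.dh 0 j * D.v 0 j :=
  ⟨fun _ ↦ D.q_dotProduct_dh_eq, fun _ ↦ D.dh_dotProduct_v_eq⟩
end

section
/- Given a neutral trajectory datum, the function w(t) = Σ_{j=1}^n q_j(t) δh_j(t) is bounded on [0, ∞). -/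
open Matrix Filter Set

/-! The weighted quadratic form `Φ(x) = ∑ⱼ xⱼ² / mⱼ` is conserved along `δh`: between collisions
`δh` is constant (zero derivative, plus right-continuity at the left endpoint), a floor collision
leaves `δh` unchanged, and for `γ = (mᵢ - mᵢ₊₁) / (mᵢ + mᵢ₊₁)` the matrix `R_iᵀ` preserves `Φ`.
Hence `|δhⱼ(t)| ≤ √(mⱼ Φ(δh(0)))`, and with `0 ≤ qⱼ ≤ C` this bounds `w`. -/

theorem eq_of_continuousWithinAt_of_hasDerivAt_zero {f : ℝ → ℝ} {a b : ℝ} (hab : a ≤ b)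
    (ha : ContinuousWithinAt f (Ici a) a) (hf : ∀ x ∈ Ioc a b, HasDerivAt f 0 x) :
    f b = f a := by
  rcases hab.eq_or_lt with rfl | hab
  · rfl
  have hcont : ContinuousOn f (Icc a b) := by
    intro x hx
    rcases hx.1.eq_or_lt with rfl | hax
    · exact ha.mono Icc_subset_Ici_self
    · exact (hf x ⟨hax, hx.2⟩).continuousAt.continuousWithinAt
  obtain ⟨c, -, hc⟩ := exists_hasDerivAt_eq_slope f (fun _ => 0) hab hcont
    fun x hx => hf x (Ioo_subset_Ioc_self hx)
  rw [eq_comm, div_eq_zero_iff, sub_eq_zero] at hc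
  exact hc.resolve_right (sub_ne_zero.2 hab.ne')

theorem exists_mem_Ico_of_tendsto_atTop {α : Type*} [LinearOrder α] [NoMaxOrder α]
    {u : ℕ → α} (hu : Tendsto u atTop atTop) {t : α} (ht : u 0 ≤ t) :
    ∃ k, t ∈ Ico (u k) (u (k + 1)) := by
  classical
  have hex : ∃ N, t < u N := (hu.eventually_gt_atTop t).exists
  have hN : Nat.find hex ≠ 0 := fun h => (Nat.find_spec hex).not_ge (h ▸ ht)
  refine ⟨Nat.find hex - 1, not_lt.1 (Nat.find_min hex (by omega)), ?_⟩
  rw [Nat.sub_add_cancel (Nat.one_le_iff_ne_zero.2 hN)]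
  exact Nat.find_spec hex

section CollisionMatrix

variable {n i : ℕ} {γ : ℝ} {i₀ i₁ : Fin n}

theorem collMat_transpose_mulVec_apply_left (h₀ : i₀.val = i) (h₁ : i₁.val = i + 1)
    (x : Fin n → ℝ) : ((collMat n i γ)ᵀ *ᵥ x) i₀ = γ * x i₀ + (1 + γ) * x i₁ := by
  rw [mulVec, dotProduct, Fintype.sum_eq_add i₀ i₁ (Fin.ne_of_val_ne (by omega))]
  · simp [collMat, h₀, h₁]
  · rintro k ⟨hk₀, hk₁⟩
    have : k.val ≠ i := fun h => hk₀ (Fin.ext (by omega))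
    have : k.val ≠ i + 1 := fun h => hk₁ (Fin.ext (by omega))
    simp [collMat, *]

theorem collMat_transpose_mulVec_apply_right (h₀ : i₀.val = i) (h₁ : i₁.val = i + 1)
    (x : Fin n → ℝ) : ((collMat n i γ)ᵀ *ᵥ x) i₁ = (1 - γ) * x i₀ - γ * x i₁ := by
  rw [mulVec, dotProduct, Fintype.sum_eq_add i₀ i₁ (Fin.ne_of_val_ne (by omega))]
  · simp [collMat, h₀, h₁, sub_eq_add_neg]
  · rintro k ⟨hk₀, hk₁⟩
    have : k.val ≠ i := fun h => hk₀ (Fin.ext (by omega))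
    have : k.val ≠ i + 1 := fun h => hk₁ (Fin.ext (by omega))
    simp [collMat, *]

theorem collMat_transpose_mulVec_apply_of_ne {j : Fin n} (hj₀ : j.val ≠ i)
    (hj₁ : j.val ≠ i + 1) (x : Fin n → ℝ) : ((collMat n i γ)ᵀ *ᵥ x) j = x j := by
  rw [mulVec, dotProduct, Fintype.sum_eq_single j]
  · simp [collMat, hj₀, hj₁]
  · intro k hk
    simp [collMat, hj₀, hj₁, hk]

end CollisionMatrix

noncomputable def massNormSq {n : ℕ} (m : Fin n → ℝ) (x : Fin n → ℝ) : ℝ :=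
  ∑ j, x j ^ 2 / m j

theorem sq_le_mul_massNormSq {n : ℕ} {m : Fin n → ℝ} (hm : ∀ j, 0 < m j) (x : Fin n → ℝ)
    (j : Fin n) : x j ^ 2 ≤ m j * massNormSq m x := by
  have hj : x j ^ 2 / m j ≤ massNormSq m x :=
    Finset.single_le_sum (f := fun j => x j ^ 2 / m j)
      (fun k _ => div_nonneg (sq_nonneg _) (hm k).le) (Finset.mem_univ j)
  rwa [div_le_iff₀' (hm j)] at hj

theorem massNormSq_collMat_transpose_mulVec {n i : ℕ} {m : Fin n → ℝ} (hm : ∀ j, 0 < m j)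
    {i₀ i₁ : Fin n} (h₀ : i₀.val = i) (h₁ : i₁.val = i + 1) (x : Fin n → ℝ) :
    massNormSq m ((collMat n i ((m i₀ - m i₁) / (m i₀ + m i₁)))ᵀ *ᵥ x) = massNormSq m x := by
  rw [← sub_eq_zero, massNormSq, massNormSq, ← Finset.sum_sub_distrib,
    Fintype.sum_eq_add i₀ i₁ (Fin.ne_of_val_ne (by omega))]
  · rw [collMat_transpose_mulVec_apply_left h₀ h₁, collMat_transpose_mulVec_apply_right h₀ h₁]
    have := hm i₀
    have := hm i₁
    field_simp
    ring
  · rintro j ⟨hj₀, hj₁⟩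
    rw [collMat_transpose_mulVec_apply_of_ne (fun h => hj₀ (Fin.ext (by omega)))
      (fun h => hj₁ (Fin.ext (by omega))), sub_self]

namespace NeutralDatum

variable {n : ℕ} {m : Fin n → ℝ} (D : NeutralDatum n m)

theorem dh_eq_of_forall_notMem_Ioc {a b : ℝ} (ha : 0 ≤ a) (hab : a ≤ b)
    (hfree : ∀ k, D.tc k ∉ Ioc a b) : D.dh b = D.dh a := by
  funext j
  refine eq_of_continuousWithinAt_of_hasDerivAt_zero hab (D.dh_rc a ha j) fun x hx => ?_
  have hx₀ : 0 < x := ha.trans_lt hx.1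
  have hnc : x ∉ range D.tc := by
    rintro ⟨k, rfl⟩
    exact hfree k hx
  exact (D.dh_deriv x hx₀.le hnc j).hasDerivAt (Ici_mem_nhds hx₀)

theorem dhminus_eq_of_forall_notMem_Ioo {a : ℝ} {k : ℕ} (ha : 0 ≤ a) (hak : a < D.tc k)
    (hfree : ∀ k', D.tc k' ∉ Ioo a (D.tc k)) : D.dhminus k = D.dh a := by
  funext j
  refine tendsto_nhds_unique (D.dh_ll k j) (tendsto_const_nhds.congr' ?_)
  filter_upwards [Ioo_mem_nhdsLT hak] with s hs
  rw [D.dh_eq_of_forall_notMem_Ioc ha hs.1.le fun k' hk' => hfree k' ⟨hk'.1, hk'.2.trans_lt hs.2⟩]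

theorem tc_notMem_Ioo_succ (k k' : ℕ) : D.tc k' ∉ Ioo (D.tc k) (D.tc (k + 1)) := by
  rintro ⟨h, h'⟩
  have := D.tc_mono.lt_iff_lt.1 h
  have := D.tc_mono.lt_iff_lt.1 h'
  omega

theorem tc_nonneg (k : ℕ) : 0 ≤ D.tc k :=
  D.tc_pos.le.trans (D.tc_mono.monotone k.zero_le)

theorem dhminus_zero : D.dhminus 0 = D.dh 0 :=
  D.dhminus_eq_of_forall_notMem_Ioo le_rfl D.tc_pos fun k' hk' =>
    hk'.2.not_ge (D.tc_mono.monotone k'.zero_le)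

theorem dhminus_succ (k : ℕ) : D.dhminus (k + 1) = D.dh (D.tc k) :=
  D.dhminus_eq_of_forall_notMem_Ioo (D.tc_nonneg k) (D.tc_mono k.lt_succ_self)
    (D.tc_notMem_Ioo_succ k)

theorem massNormSq_dh_tc_eq_dhminus (k : ℕ) :
    massNormSq m (D.dh (D.tc k)) = massNormSq m (D.dhminus k) := by
  rcases h : D.ty k with _ | i
  · rw [(D.coll_floor k h).2.2.2.1]
  · have hin : i + 1 < n := h ▸ D.ty_lt k
    rw [(D.coll_pair k i hin h).2.2]
    exact massNormSq_collMat_transpose_mulVec (i₀ := ⟨i, by omega⟩) (i₁ := ⟨i + 1, hin⟩)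
      D.hm rfl rfl _

theorem massNormSq_dh_tc (k : ℕ) : massNormSq m (D.dh (D.tc k)) = massNormSq m (D.dh 0) := by
  induction k with
  | zero => rw [massNormSq_dh_tc_eq_dhminus, dhminus_zero]
  | succ k ih => rw [massNormSq_dh_tc_eq_dhminus, dhminus_succ, ih]

theorem massNormSq_dh {t : ℝ} (ht : 0 ≤ t) : massNormSq m (D.dh t) = massNormSq m (D.dh 0) := by
  rcases lt_or_ge t (D.tc 0) with htc | htc
  · rw [D.dh_eq_of_forall_notMem_Ioc le_rfl ht fun k hk =>
      (hk.2.trans_lt htc).not_ge (D.tc_mono.monotone k.zero_le)]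
  · obtain ⟨k, hk, hk'⟩ := exists_mem_Ico_of_tendsto_atTop D.tc_tendsto htc
    rw [D.dh_eq_of_forall_notMem_Ioc (D.tc_nonneg k) hk fun k' hk'' =>
      D.tc_notMem_Ioo_succ k k' ⟨hk''.1, hk''.2.trans_lt hk'⟩, massNormSq_dh_tc]

theorem abs_q_le {t : ℝ} (ht : 0 ≤ t) (j : Fin n) : |D.q t j| ≤ D.C := by
  rw [abs_of_nonneg (D.q_bdd j t ht).1]
  exact (D.q_bdd j t ht).2

theorem abs_dh_le {t : ℝ} (ht : 0 ≤ t) (j : Fin n) :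
    |D.dh t j| ≤ √(m j * massNormSq m (D.dh 0)) :=
  Real.abs_le_sqrt (D.massNormSq_dh ht ▸ sq_le_mul_massNormSq D.hm _ j)

end NeutralDatum

/-- given a neutral trajectory datum, the function
`w(t) = ∑ j, q_j(t) δh_j(t)` is bounded on `[0, ∞)`. -/
theorem neutral_w_bounded (n : ℕ) (m : Fin n → ℝ) (D : NeutralDatum n m) :
    ∃ K : ℝ, ∀ t : ℝ, 0 ≤ t → |∑ j, D.q t j * D.dh t j| ≤ K := by
  refine ⟨D.C * ∑ j, √(m j * massNormSq m (D.dh 0)), fun t ht => ?_⟩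
  calc |∑ j, D.q t j * D.dh t j| ≤ ∑ j, |D.q t j| * |D.dh t j| := by
        simpa only [abs_mul] using Finset.abs_sum_le_sum_abs (fun j => D.q t j * D.dh t j) _
    _ ≤ ∑ j, D.C * √(m j * massNormSq m (D.dh 0)) := by
        gcongr with j
        · exact D.C_pos.le
        · exact D.abs_q_le ht j
        · exact D.abs_dh_le ht j
    _ = D.C * ∑ j, √(m j * massNormSq m (D.dh 0)) := (Finset.mul_sum _ _ _).symm
end

section
/- If all jumps of f are nonnegative (j_k ≥ 0 for every k) and f is bounded above on [0, t₀), then Σ_{k=1}^∞ j_k < ∞ and the left limit lim_{t → t₀⁻} f(t) exists and equals f(0) − t₀ + Σ_{k=1}^∞ j_k. -/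
open Filter Set

/-- let `0 < t_1 < t_2 < ⋯ < t₀` with `t_k → t₀`, and let
`f : [0, t₀) → ℝ` be right-continuous, have left limits `fm k = f(t_k⁻)` at every
`t_k`, and satisfy `f' = -1` off the collision times.  If all jumps
`j_k = f(t_k) − f(t_k⁻)` are nonnegative and `f` is bounded above on `[0, t₀)`,
then `∑ k, j_k < ∞` and `lim_{t → t₀⁻} f(t) = f(0) − t₀ + ∑ k, j_k`. -/
theorem left_limit_of_nonneg_jumps (t0 : ℝ) (ht0 : 0 < t0)
    (tc : ℕ → ℝ) (htc0 : 0 < tc 0) (htc_mono : StrictMono tc)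
    (htc_lt : ∀ k, tc k < t0) (htc_lim : Tendsto tc atTop (nhds t0))
    (f : ℝ → ℝ) (fm : ℕ → ℝ)
    (hf_rc : ∀ t, 0 ≤ t → t < t0 →
      Tendsto f (nhdsWithin t (Ici t)) (nhds (f t)))
    (hf_ll : ∀ k, Tendsto f (nhdsWithin (tc k) (Iio (tc k))) (nhds (fm k)))
    (hf_deriv : ∀ t, 0 ≤ t → t < t0 → t ∉ range tc →
      HasDerivWithinAt f (-1) (Ico 0 t0) t)
    (hjump_nonneg : ∀ k, 0 ≤ f (tc k) - fm k)
    (hbdd : ∃ M : ℝ, ∀ t, 0 ≤ t → t < t0 → f t ≤ M) :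
    Summable (fun k => f (tc k) - fm k) ∧
      Tendsto f (nhdsWithin t0 (Iio t0))
        (nhds (f 0 - t0 + ∑' k, (f (tc k) - fm k))) := by
  classical
  -- Key lemma: f is affine with slope -1 on gaps between collision times.
  have key : ∀ a b : ℝ, 0 ≤ a → b ≤ t0 → (∀ k, tc k ∉ Ioo a b) →
      ∀ t ∈ Ioo a b, f t = f a - (t - a) := by
    intro a b ha hb hno t ht
    have hta : a < t := ht.1
    have htb : t < b := ht.2
    have ht0' : t < t0 := lt_of_lt_of_le htb hb
    have step : ∀ s ∈ Ioc a t, f s = f t + (t - s) := by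
      intro s hs
      have hsa : a < s := hs.1
      have hst : s ≤ t := hs.2
      have hs0 : (0:ℝ) < s := lt_of_le_of_lt ha hsa
      have hderivf : ∀ x ∈ Ico s t, HasDerivWithinAt f (-1) (Ici x) x := by
        intro x hx
        have hx0 : (0:ℝ) < x := lt_of_lt_of_le hs0 hx.1
        have hxt0' : x < t0 := lt_of_lt_of_le (lt_of_lt_of_le hx.2 htb.le) hb
        have hxnot : x ∉ range tc := by
          rintro ⟨k, rfl⟩
          exact hno k ⟨lt_of_lt_of_le hsa hx.1, lt_of_lt_of_le hx.2 htb.le⟩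
        have hmem : Ico (0:ℝ) t0 ∈ nhdsWithin x (Ici x) :=
          mem_nhdsWithin_of_mem_nhds
            (mem_of_superset (Ioo_mem_nhds hx0 hxt0') Ioo_subset_Ico_self)
        exact (hf_deriv x hx0.le hxt0' hxnot).mono_of_mem_nhdsWithin hmem
      have hderivg : ∀ x ∈ Ico s t,
          HasDerivWithinAt (fun x => f s - (x - s)) (-1) (Ici x) x := by
        intro x _
        have : HasDerivAt (fun x => f s - (x - s)) (-1) x := by
          simpa using (((hasDerivAt_id x).sub_const s).const_sub (f s))
        exact this.hasDerivWithinAt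
      have hsub : Icc s t ⊆ Ico 0 t0 := fun x hx =>
        ⟨le_trans hs0.le hx.1, lt_of_le_of_lt hx.2 ht0'⟩
      have hcontf : ContinuousOn f (Icc s t) := by
        intro x hx
        have hx0 : (0:ℝ) ≤ x := le_trans hs0.le hx.1
        have hxt0 : x < t0 := lt_of_le_of_lt hx.2 ht0'
        by_cases hxr : x ∈ range tc
        · obtain ⟨k, rfl⟩ := hxr
          -- tc k ∈ Icc s t ⊆ Ioo a b is impossible
          exact absurd ⟨lt_of_lt_of_le hsa hx.1, lt_of_le_of_lt hx.2 htb⟩ (hno k)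
        · exact ((hf_deriv x hx0 hxt0 hxr).continuousWithinAt).mono hsub
      have hcontg : ContinuousOn (fun x => f s - (x - s)) (Icc s t) :=
        (continuous_const.sub (continuous_id.sub continuous_const)).continuousOn
      have heq := eq_of_has_deriv_right_eq hderivf hderivg hcontf hcontg
        (by simp) t (right_mem_Icc.2 hst)
      -- heq : f t = f s - (t - s)
      linarith
    have hne : (nhdsWithin a (Ioi a)).NeBot := by infer_instance
    have h1 : Tendsto f (nhdsWithin a (Ioi a)) (nhds (f a)) :=
      (hf_rc a ha (lt_trans hta ht0')).mono_left (nhdsWithin_mono a Ioi_subset_Ici_self)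
    have h2 : Tendsto (fun s => f t + (t - s)) (nhdsWithin a (Ioi a))
        (nhds (f t + (t - a))) :=
      ((continuous_const.add (continuous_const.sub continuous_id)).tendsto a).mono_left
        nhdsWithin_le_nhds
    have h3 : f =ᶠ[nhdsWithin a (Ioi a)] fun s => f t + (t - s) := by
      filter_upwards [Ioc_mem_nhdsGT_of_mem ⟨le_refl a, hta⟩] with s hs
      exact step s hs
    have := tendsto_nhds_unique h1 (h2.congr' h3.symm)
    linarith
  -- Left limits via the key lemma.
  have keyL : ∀ a k, 0 ≤ a → a < tc k → (∀ j, tc j ∉ Ioo a (tc k)) →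
      fm k = f a - (tc k - a) := by
    intro a k ha hak hno
    have h2 : Tendsto (fun t => f a - (t - a)) (nhdsWithin (tc k) (Iio (tc k)))
        (nhds (f a - (tc k - a))) :=
      ((continuous_const.sub (continuous_id.sub continuous_const)).tendsto (tc k)).mono_left
        nhdsWithin_le_nhds
    have h3 : f =ᶠ[nhdsWithin (tc k) (Iio (tc k))] fun t => f a - (t - a) := by
      filter_upwards [Ioo_mem_nhdsLT_of_mem (⟨hak, le_refl _⟩ : tc k ∈ Ioc a (tc k))] with t ht
      exact key a (tc k) ha (htc_lt k).le hno t ht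
    exact tendsto_nhds_unique (hf_ll k) (h2.congr' h3.symm)
  have htc_pos : ∀ n, 0 < tc n := fun n => lt_of_lt_of_le htc0 (htc_mono.monotone (Nat.zero_le n))
  have fact0 : fm 0 = f 0 - tc 0 := by
    have := keyL 0 0 le_rfl htc0 (by
      intro j hj
      exact absurd hj.2 (not_lt.2 (htc_mono.monotone (Nat.zero_le j))))
    simpa using this
  have factk : ∀ k, fm (k+1) = f (tc k) - (tc (k+1) - tc k) := by
    intro k
    refine keyL (tc k) (k+1) (htc_pos k).le (htc_mono (Nat.lt_succ_self k)) ?_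
    intro j hj
    have h1 : k < j := htc_mono.lt_iff_lt.1 hj.1
    have h2 : j < k + 1 := htc_mono.lt_iff_lt.1 hj.2
    omega
  set S : ℕ → ℝ := fun n => ∑ i ∈ Finset.range (n+1), (f (tc i) - fm i) with hSdef
  have hS : ∀ n, f (tc n) = f 0 - tc n + S n := by
    intro n
    induction n with
    | zero =>
      have h0 : S 0 = f (tc 0) - fm 0 := Finset.sum_range_one _
      rw [h0]; linarith [fact0]
    | succ n ih =>
      have hsum : S (n+1) = S n + (f (tc (n+1)) - fm (n+1)) :=
        Finset.sum_range_succ (fun i => f (tc i) - fm i) (n+1)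
      have := factk n
      linarith
  obtain ⟨M, hM⟩ := hbdd
  have hbound : ∀ n, ∑ i ∈ Finset.range n, (f (tc i) - fm i) ≤ M - f 0 + t0 := by
    intro n
    have h1 : ∑ i ∈ Finset.range n, (f (tc i) - fm i) ≤ S n := by
      apply Finset.sum_le_sum_of_subset_of_nonneg
        (Finset.range_subset_range.2 (Nat.le_succ n))
      intro i _ _; exact hjump_nonneg i
    have h2 : f (tc n) ≤ M := hM (tc n) (htc_pos n).le (htc_lt n)
    have h3 : tc n ≤ t0 := (htc_lt n).le
    have := hS n
    linarith
  have hsummable : Summable (fun k => f (tc k) - fm k) :=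
    summable_of_sum_range_le hjump_nonneg hbound
  refine ⟨hsummable, ?_⟩
  set J := ∑' k, (f (tc k) - fm k) with hJdef
  have hS_le : ∀ n, S n ≤ J := fun n =>
    Summable.sum_le_tsum (Finset.range (n+1)) (fun i _ => hjump_nonneg i) hsummable
  have hS_tendsto : Tendsto S atTop (nhds J) :=
    (hsummable.hasSum.tendsto_sum_nat).comp (tendsto_add_atTop_nat 1)
  have hIco : ∀ n, ∀ t ∈ Ico (tc n) (tc (n+1)), f t = f 0 - t + S n := by
    intro n t ht
    rcases eq_or_lt_of_le ht.1 with h | h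
    · rw [← h]; exact hS n
    · have hno : ∀ j, tc j ∉ Ioo (tc n) (tc (n+1)) := by
        intro j hj
        have h1 : n < j := htc_mono.lt_iff_lt.1 hj.1
        have h2 : j < n + 1 := htc_mono.lt_iff_lt.1 hj.2
        omega
      have := key (tc n) (tc (n+1)) (htc_pos n).le (htc_lt (n+1)).le hno t ⟨h, ht.2⟩
      have := hS n
      linarith
  rw [Metric.tendsto_nhdsWithin_nhds]
  intro ε hε
  obtain ⟨N, hN⟩ := (Metric.tendsto_atTop.1 hS_tendsto (ε/2) (by linarith))
  have hNd : J - S N < ε/2 := by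
    have := hN N le_rfl
    rw [Real.dist_eq] at this
    have := abs_lt.1 this
    linarith [this.1]
  refine ⟨min (t0 - tc N) (ε/2), lt_min (by linarith [htc_lt N]) (by linarith), ?_⟩
  intro t ht hdist
  have ht' : t < t0 := ht
  rw [Real.dist_eq, abs_of_neg (by linarith : t - t0 < 0)] at hdist
  have hdist1 : t0 - t < t0 - tc N := lt_of_lt_of_le (by linarith) (min_le_left _ _)
  have hdist2 : t0 - t < ε/2 := lt_of_lt_of_le (by linarith) (min_le_right _ _)
  have htN : tc N < t := by linarith
  have hex : ∃ m, t < tc m := (htc_lim.eventually (Ioi_mem_nhds ht')).exists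
  have hm0ne : Nat.find hex ≠ 0 := by
    intro h
    have := Nat.find_spec hex
    rw [h] at this
    have : tc 0 ≤ tc N := htc_mono.monotone (Nat.zero_le N)
    linarith [Nat.find_spec hex, htc_mono.monotone (Nat.zero_le N)]
  obtain ⟨n, hn⟩ := Nat.exists_eq_succ_of_ne_zero hm0ne
  have htlt : t < tc (n+1) := by
    have h := Nat.find_spec hex
    rw [hn] at h
    exact h
  have htge : tc n ≤ t := not_lt.1 (Nat.find_min hex (by omega))
  have hnN : N ≤ n := by
    by_contra h
    push_neg at h
    have : tc (n+1) ≤ tc N := htc_mono.monotone (by omega)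
    linarith
  have hft : f t = f 0 - t + S n := hIco n t ⟨htge, htlt⟩
  have hSNn : S N ≤ S n := by
    apply Finset.sum_le_sum_of_subset_of_nonneg
      (Finset.range_subset_range.2 (by omega))
    intro i _ _; exact hjump_nonneg i
  have hJn : J - S n < ε/2 := by linarith
  have hJn0 : 0 ≤ J - S n := by linarith [hS_le n]
  rw [Real.dist_eq, hft, abs_lt]
  constructor <;> linarith
end

section
/- If the negative parts of the jumps of f are summable (Σ_{k=1}^∞ max(−j_k, 0) < ∞) and f is bounded above on [0, t₀), then the positive parts are also summable (Σ_{k=1}^∞ max(j_k, 0) < ∞) and the left limit lim_{t → t₀⁻} f(t) exists and equals f(0) − t₀ + Σ_{k=1}^∞ j_k. -/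
open Filter Set Finset Topology

/-! Off the jump times `f' = -1`, so by the mean value theorem (taken with the one-sided limits
at the ends of each gap) `f t + t` is constant on every gap `[t_k, t_{k+1})` and changes by
exactly `j_k` across `t_k`. Hence `f t + t = f 0 + ∑_{k ≤ n} j_k` on `[t_n, t_{n+1})`; as `f` is
bounded above and `t < t₀`, these partial sums are bounded above, which together with the
summable negative parts makes the positive parts summable. The partial sums then converge, and
so does `f t + t` as `t → t₀⁻`. -/

theorem sub_eq_mul_of_hasDerivAt_const {f : ℝ → ℝ} {a b d la lb : ℝ} (hab : a < b)
    (hf : ∀ x ∈ Ioo a b, HasDerivAt f d x)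
    (ha : Tendsto f (𝓝[>] a) (𝓝 la)) (hb : Tendsto f (𝓝[<] b) (𝓝 lb)) :
    lb - la = d * (b - a) := by
  obtain ⟨c, -, hc⟩ := exists_ratio_hasDerivAt_eq_ratio_slope' f (fun _ => d) hab id
    (fun _ => 1) hf (fun x _ => hasDerivAt_id x) ha (tendsto_id.mono_left nhdsWithin_le_nhds) hb
    (tendsto_id.mono_left nhdsWithin_le_nhds)
  linarith

theorem eq_add_mul_sub_of_hasDerivAt_const {f : ℝ → ℝ} {a b d : ℝ}
    (hf : ∀ x ∈ Ioo a b, HasDerivAt f d x) (ha : Tendsto f (𝓝[>] a) (𝓝 (f a))) :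
    ∀ x ∈ Ico a b, f x = f a + d * (x - a) := by
  rintro x ⟨hax, hxb⟩
  rcases hax.eq_or_lt with rfl | hax
  · ring
  have hx : Tendsto f (𝓝[<] x) (𝓝 (f x)) :=
    (hf x ⟨hax, hxb⟩).continuousAt.tendsto.mono_left nhdsWithin_le_nhds
  have := sub_eq_mul_of_hasDerivAt_const hax (fun y hy => hf y ⟨hy.1, hy.2.trans hxb⟩) ha hx
  linarith

theorem exists_mem_Ico_succ {α : Type*} [LinearOrder α] {s : ℕ → α} {x : α} (h0 : s 0 ≤ x)
    (hlt : ∃ k, x < s k) : ∃ n, x ∈ Ico (s n) (s (n + 1)) := by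
  classical
  have hpos : Nat.find hlt ≠ 0 := fun h => (h ▸ Nat.find_spec hlt).not_ge h0
  obtain ⟨n, hn⟩ := Nat.exists_eq_succ_of_ne_zero hpos
  refine ⟨n, not_lt.1 (Nat.find_min hlt (by omega)), ?_⟩
  simpa only [hn] using Nat.find_spec hlt

theorem StrictMono.notMem_range_of_mem_Ioo {α : Type*} [Preorder α] {s : ℕ → α}
    (hs : StrictMono s) {n : ℕ} {x : α} (hx : x ∈ Ioo (s n) (s (n + 1))) : x ∉ range s := by
  rintro ⟨k, rfl⟩
  have := hs.lt_iff_lt.1 hx.1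
  have := hs.lt_iff_lt.1 hx.2
  omega

theorem tendsto_nhdsLT_of_forall_mem_Ico_eq {α β : Type*} [LinearOrder α] [TopologicalSpace α]
    [OrderTopology α] [TopologicalSpace β] {s : ℕ → α} {t₀ : α} {g : α → β} {c : ℕ → β} {L : β}
    (hs : Monotone s) (hs_lt : ∀ n, s n < t₀) (hs_lim : Tendsto s atTop (𝓝 t₀))
    (hg : ∀ n, ∀ x ∈ Ico (s n) (s (n + 1)), g x = c n) (hc : Tendsto c atTop (𝓝 L)) :
    Tendsto g (𝓝[<] t₀) (𝓝 L) := by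
  refine fun U hU => mem_map.2 ?_
  obtain ⟨N, hN⟩ := eventually_atTop.1 (hc hU)
  filter_upwards [Ioo_mem_nhdsLT (hs_lt N)] with x hx
  obtain ⟨n, hn⟩ := exists_mem_Ico_succ ((hs N.zero_le).trans hx.1.le)
    (hs_lim.eventually (lt_mem_nhds hx.2)).exists
  have hNn : N ≤ n := Nat.lt_succ_iff.1 (hs.reflect_lt (hx.1.trans hn.2))
  simpa only [Set.mem_preimage, hg n x hn] using hN n hNn

theorem summable_max_zero_of_sum_range_le {a : ℕ → ℝ} {C : ℝ}
    (hneg : Summable fun k => max (-a k) 0) (hle : ∀ n, ∑ k ∈ range n, a k ≤ C) :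
    Summable fun k => max (a k) 0 := by
  refine summable_of_sum_range_le (c := C + ∑' k, max (-a k) 0) (fun _ => le_max_right _ _)
    fun n => ?_
  calc ∑ k ∈ range n, max (a k) 0 = ∑ k ∈ range n, a k + ∑ k ∈ range n, max (-a k) 0 := by
        rw [← sum_add_distrib]
        refine sum_congr rfl fun k _ => ?_
        linarith [max_zero_sub_max_neg_zero_eq_self (a k)]
    _ ≤ C + ∑' k, max (-a k) 0 :=
        add_le_add (hle n) (hneg.sum_le_tsum _ fun _ _ => le_max_right _ _)

theorem apply_add_eq_add_sum_jumps {t0 : ℝ} {tc : ℕ → ℝ} {f : ℝ → ℝ} {fm : ℕ → ℝ}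
    (htc0 : 0 < tc 0) (htc_mono : StrictMono tc) (htc_lt : ∀ k, tc k < t0)
    (hf_rc : ∀ t, 0 ≤ t → t < t0 → Tendsto f (𝓝[≥] t) (𝓝 (f t)))
    (hf_ll : ∀ k, Tendsto f (𝓝[<] tc k) (𝓝 (fm k)))
    (hf_deriv : ∀ t, 0 ≤ t → t < t0 → t ∉ range tc → HasDerivWithinAt f (-1) (Ico 0 t0) t)
    (n : ℕ) : ∀ x ∈ Ico (tc n) (tc (n + 1)),
      f x + x = f 0 + ∑ k ∈ range (n + 1), (f (tc k) - fm k) := by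
  have htc_nonneg (n : ℕ) : 0 ≤ tc n := htc0.le.trans (htc_mono.monotone n.zero_le)
  have hgap (a b : ℝ) (ha : 0 ≤ a) (hab : a < b) (hb : b ≤ t0)
      (hfree : ∀ x ∈ Ioo a b, x ∉ range tc) :
      (∀ x ∈ Ico a b, f x + x = f a + a) ∧
        ∀ L, Tendsto f (𝓝[<] b) (𝓝 L) → L + b = f a + a := by
    have hderiv (x : ℝ) (hx : x ∈ Ioo a b) : HasDerivAt f (-1) x :=
      (hf_deriv x (ha.trans hx.1.le) (hx.2.trans_le hb) (hfree x hx)).hasDerivAt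
        (Ico_mem_nhds (ha.trans_lt hx.1) (hx.2.trans_le hb))
    have hright : Tendsto f (𝓝[>] a) (𝓝 (f a)) :=
      (hf_rc a ha (hab.trans_le hb)).mono_left (nhdsWithin_mono _ Ioi_subset_Ici_self)
    refine ⟨fun x hx => ?_, fun L hL => ?_⟩
    · linarith [eq_add_mul_sub_of_hasDerivAt_const hderiv hright x hx]
    · linarith [sub_eq_mul_of_hasDerivAt_const hab hderiv hright hL]
  have hfirst := hgap 0 (tc 0) le_rfl htc0 (htc_lt 0).le <| by
    rintro x hx ⟨k, rfl⟩
    exact hx.2.not_ge (htc_mono.monotone k.zero_le)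
  have hnext (n : ℕ) := hgap (tc n) (tc (n + 1)) (htc_nonneg n) (htc_mono n.lt_succ_self)
    (htc_lt _).le fun _ => htc_mono.notMem_range_of_mem_Ioo
  have hjump (n : ℕ) : f (tc n) + tc n = f 0 + ∑ k ∈ range (n + 1), (f (tc k) - fm k) := by
    induction n with
    | zero => simp only [zero_add, range_one, sum_singleton]; linarith [hfirst.2 _ (hf_ll 0)]
    | succ n ih => rw [sum_range_succ]; linarith [(hnext n).2 _ (hf_ll (n + 1))]
  exact fun x hx => ((hnext n).1 x hx).trans (hjump n)

/-- let `0 < t_1 < t_2 < ⋯ < t₀` with `t_k → t₀`, and let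
`f : [0, t₀) → ℝ` be right-continuous, have left limits `fm k = f(t_k⁻)` at every
`t_k`, and satisfy `f' = -1` off the collision times.  If the negative parts of the
jumps `j_k = f(t_k) − f(t_k⁻)` are summable and `f` is bounded above on `[0, t₀)`,
then the positive parts are also summable and
`lim_{t → t₀⁻} f(t) = f(0) − t₀ + ∑ k, j_k`. -/
theorem left_limit_of_summable_negative_jumps (t0 : ℝ) (ht0 : 0 < t0)
    (tc : ℕ → ℝ) (htc0 : 0 < tc 0) (htc_mono : StrictMono tc)
    (htc_lt : ∀ k, tc k < t0) (htc_lim : Tendsto tc atTop (nhds t0))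
    (f : ℝ → ℝ) (fm : ℕ → ℝ)
    (hf_rc : ∀ t, 0 ≤ t → t < t0 →
      Tendsto f (nhdsWithin t (Ici t)) (nhds (f t)))
    (hf_ll : ∀ k, Tendsto f (nhdsWithin (tc k) (Iio (tc k))) (nhds (fm k)))
    (hf_deriv : ∀ t, 0 ≤ t → t < t0 → t ∉ range tc →
      HasDerivWithinAt f (-1) (Ico 0 t0) t)
    (hneg_summable : Summable (fun k => max (-(f (tc k) - fm k)) 0))
    (hbdd : ∃ M : ℝ, ∀ t, 0 ≤ t → t < t0 → f t ≤ M) :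
    Summable (fun k => max (f (tc k) - fm k) 0) ∧
      Tendsto f (nhdsWithin t0 (Iio t0))
        (nhds (f 0 - t0 + ∑' k, (f (tc k) - fm k))) := by
  obtain ⟨M, hM⟩ := hbdd
  set j : ℕ → ℝ := fun k => f (tc k) - fm k
  have hformula := apply_add_eq_add_sum_jumps htc0 htc_mono htc_lt hf_rc hf_ll hf_deriv
  have hpos : Summable fun k => max (j k) 0 := by
    refine summable_max_zero_of_sum_range_le (C := M + t0 - f 0) hneg_summable ?_
    rintro (_ | n)
    · simp only [range_zero, sum_empty]; linarith [hM 0 le_rfl ht0]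
    · have htc_nonneg : 0 ≤ tc n := htc0.le.trans (htc_mono.monotone n.zero_le)
      have := hformula n (tc n) ⟨le_rfl, htc_mono n.lt_succ_self⟩
      linarith [hM _ htc_nonneg (htc_lt n), htc_lt n]
  have hsum : Summable j := by
    have hneg : Summable fun k => max (-j k) 0 := hneg_summable
    simpa only [max_zero_sub_max_neg_zero_eq_self] using hpos.sub hneg
  refine ⟨hpos, ?_⟩
  have hplus : Tendsto (fun x => f x + x) (𝓝[<] t0) (𝓝 (f 0 + ∑' k, j k)) :=
    tendsto_nhdsLT_of_forall_mem_Ico_eq htc_mono.monotone htc_lt htc_lim hformula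
      (tendsto_const_nhds.add (hsum.hasSum.tendsto_sum_nat.comp (tendsto_add_atTop_nat 1)))
  convert hplus.sub (tendsto_id.mono_left nhdsWithin_le_nhds) using 2 with x
  · simp
  · ring
end

section
/- (Lemma A.2) Given an accumulating collision datum, for every index i with 1 ≤ i ≤ a+1 the left limit lim_{t → t₀⁻} v_i(t) exists. -/
open Matrix Filter Set

/-- An accumulating collision datum for the falling-ball system with `n ≥ 2` particles of
positive masses `m`: a time `t₀ > 0`, a strictly increasing sequence of collision times
`0 < t_1 < t_2 < ⋯ < t₀` with `t_k → t₀`, an index `a ≤ n − 1` with collision types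
`ty k ∈ {0, 1, …, a}` such that every value in `{0, …, a}` occurs infinitely often
(here `ty k = 0` is a floor collision and `ty k = i + 1` is a collision of the 0-based
particles `i` and `i + 1`), a bound `C > 0`, and functions `q, v : [0, t₀) → ℝⁿ`
satisfying conditions (a)–(e) of the paper.  The field `vminus k` records the left limit
`v(t_k⁻)`. -/
structure AccumDatum (n : ℕ) (m : Fin n → ℝ) : Type where
  hn : 2 ≤ n
  hm : ∀ j, 0 < m j
  t0 : ℝ
  t0_pos : 0 < t0
  /-- collision times (0-indexed: `tc 0` is the paper's `t_1`) -/
  tc : ℕ → ℝ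
  tc_pos : 0 < tc 0
  tc_mono : StrictMono tc
  tc_lt : ∀ k, tc k < t0
  tc_lim : Tendsto tc atTop (nhds t0)
  a : ℕ
  ha : a ≤ n - 1
  /-- collision types -/
  ty : ℕ → ℕ
  ty_le : ∀ k, ty k ≤ a
  /-- every value in `{0, …, a}` is attained by `ty` infinitely often -/
  ty_inf : ∀ i, i ≤ a → ∀ K : ℕ, ∃ k, K ≤ k ∧ ty k = i
  C : ℝ
  C_pos : 0 < C
  q : ℝ → Fin n → ℝ
  v : ℝ → Fin n → ℝ
  /-- the left limit `v(t_k⁻)` -/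
  vminus : ℕ → Fin n → ℝ
  /-- (a) `q` is continuous on `[0, t₀)` -/
  q_cont : ∀ j, ContinuousOn (fun t => q t j) (Ico 0 t0)
  /-- (a) `0 ≤ q_1(t) ≤ q_2(t) ≤ ⋯ ≤ q_n(t)` -/
  q_nonneg : ∀ t, 0 ≤ t → t < t0 → 0 ≤ q t ⟨0, by omega⟩
  q_mono : ∀ t, 0 ≤ t → t < t0 → ∀ j j' : Fin n, j ≤ j' → q t j ≤ q t j'
  /-- (a) `|v_j(t)| ≤ C` -/
  v_bdd : ∀ t, 0 ≤ t → t < t0 → ∀ j, |v t j| ≤ C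
  /-- (b) between collisions, `q' = v` -/
  q_deriv : ∀ t, 0 ≤ t → t < t0 → t ∉ range tc → ∀ j,
    HasDerivWithinAt (fun s => q s j) (v t j) (Ico 0 t0) t
  /-- (b) between collisions, `v' = -1` componentwise -/
  v_deriv : ∀ t, 0 ≤ t → t < t0 → t ∉ range tc → ∀ j,
    HasDerivWithinAt (fun s => v s j) (-1) (Ico 0 t0) t
  /-- (c) `v` is right-continuous -/
  v_rc : ∀ t, 0 ≤ t → t < t0 → ∀ j,
    Tendsto (fun s => v s j) (nhdsWithin t (Ici t)) (nhds (v t j))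
  /-- (c) `v` has left limit `vminus k` at `tc k` -/
  v_ll : ∀ k j, Tendsto (fun s => v s j) (nhdsWithin (tc k) (Iio (tc k))) (nhds (vminus k j))
  /-- (d) collision of particles `i`, `i+1` (0-based): `q_i = q_{i+1}`,
  `v_i(t_k⁻) > v_{i+1}(t_k⁻)` and `v⁺ = R_i v⁻` -/
  coll_pair : ∀ k, ∀ i : ℕ, ∀ hi : i + 1 < n, ty k = i + 1 →
    q (tc k) ⟨i, Nat.lt_of_succ_lt hi⟩ = q (tc k) ⟨i + 1, hi⟩ ∧
    vminus k ⟨i, Nat.lt_of_succ_lt hi⟩ > vminus k ⟨i + 1, hi⟩ ∧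
    v (tc k) = (collMat n i ((m ⟨i, Nat.lt_of_succ_lt hi⟩ - m ⟨i + 1, hi⟩) /
        (m ⟨i, Nat.lt_of_succ_lt hi⟩ + m ⟨i + 1, hi⟩))) *ᵥ vminus k
  /-- (e) floor collision: `q_1 = 0`, `v_1(t_k⁻) < 0`, `v_1⁺ = -v_1⁻`, and the other
  velocities are unchanged -/
  coll_floor : ∀ k, ty k = 0 →
    q (tc k) ⟨0, by omega⟩ = 0 ∧
    vminus k ⟨0, by omega⟩ < 0 ∧
    v (tc k) ⟨0, by omega⟩ = -vminus k ⟨0, by omega⟩ ∧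
    ∀ j : Fin n, j ≠ ⟨0, by omega⟩ → v (tc k) j = vminus k j


/-!
Proof idea: for nonnegative weights `c` that are nondecreasing in the particle index, the
weighted momentum `∑ c_p m_p (v_p(t) + t)` is nondecreasing in time. Between collisions it is
constant, because gravity gives `v_p' = -1`; a floor collision only raises `v_1`; a collision of
particles `i, i+1` passes the momentum `2 μ (v_i - v_{i+1})`, with `μ` the reduced mass, from `i`
to `i+1`, which nondecreasing weights can only count as a gain. Being also bounded, the weighted
momentum has a limit as `t → t₀⁻`; taking for `c` the indicators of `{p ≥ i}` and `{p ≥ i+1}`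
and subtracting isolates `m_i (v_i(t) + t)`.
-/

open Topology

theorem exists_mem_Ico_succ_of_le_of_lt {α : Type*} [LinearOrder α] {u : ℕ → α} {t : α}
    (h0 : u 0 ≤ t) (h : ∃ k, t < u k) : ∃ k, t ∈ Ico (u k) (u (k + 1)) := by
  classical
  obtain ⟨k, hk⟩ : ∃ k, Nat.find h = k + 1 :=
    Nat.exists_eq_succ_of_ne_zero fun h' => (Nat.find_spec h).not_ge (h' ▸ h0)
  exact ⟨k, not_lt.1 (Nat.find_min h (by omega)), hk ▸ Nat.find_spec h⟩

theorem monotoneOn_Ico_of_eqOn_Ico_of_le_succ {α β : Type*} [LinearOrder α] [Preorder β]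
    {u : ℕ → α} {f : α → β} {b : α} (hu : Monotone u) (hub : ∀ t < b, ∃ k, t < u k)
    (hconst : ∀ k, ∀ t ∈ Ico (u k) (u (k + 1)), f t = f (u k))
    (hstep : ∀ k, f (u k) ≤ f (u (k + 1))) : MonotoneOn f (Ico (u 0) b) := by
  intro s hs t ht hst
  obtain ⟨j, hj⟩ := exists_mem_Ico_succ_of_le_of_lt hs.1 (hub s hs.2)
  obtain ⟨l, hl⟩ := exists_mem_Ico_succ_of_le_of_lt ht.1 (hub t ht.2)
  have hjl : j ≤ l := by
    by_contra! h
    exact (hu (Nat.succ_le_of_lt h)).not_gt (hj.1.trans_lt (hst.trans_lt hl.2))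
  rw [hconst j s hj, hconst l t hl]
  exact monotone_nat_of_le_succ hstep hjl

section collMat

variable {n i : ℕ} (γ : ℝ) (x : Fin n → ℝ)

theorem collMat_mulVec_of_ne {p : Fin n} (h0 : (p : ℕ) ≠ i) (h1 : (p : ℕ) ≠ i + 1) :
    (collMat n i γ *ᵥ x) p = x p := by
  simp [Matrix.mulVec, dotProduct, collMat, h0, h1]

theorem collMat_mulVec_left (hi : i + 1 < n) :
    (collMat n i γ *ᵥ x) ⟨i, by omega⟩ = γ * x ⟨i, by omega⟩ + (1 - γ) * x ⟨i + 1, hi⟩ := by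
  rw [Matrix.mulVec, dotProduct,
    Fintype.sum_eq_add ⟨i, by omega⟩ ⟨i + 1, hi⟩ (by simp [Fin.ext_iff])]
  · simp [collMat]
  · rintro q ⟨h0, h1⟩
    simp only [ne_eq, Fin.ext_iff] at h0 h1
    simp [collMat, Fin.ext_iff, h0, h1, Ne.symm h0]

theorem collMat_mulVec_right (hi : i + 1 < n) :
    (collMat n i γ *ᵥ x) ⟨i + 1, hi⟩ = (1 + γ) * x ⟨i, by omega⟩ - γ * x ⟨i + 1, hi⟩ := by
  rw [Matrix.mulVec, dotProduct,
    Fintype.sum_eq_add ⟨i, by omega⟩ ⟨i + 1, hi⟩ (by simp [Fin.ext_iff])]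
  · simp [collMat]
    ring
  · rintro q ⟨h0, h1⟩
    simp only [ne_eq, Fin.ext_iff] at h0 h1
    simp [collMat, Fin.ext_iff, h0, h1, Ne.symm h1]

end collMat

def weightedMomentum {n : ℕ} (m c x : Fin n → ℝ) (t : ℝ) : ℝ :=
  ∑ p, c p * m p * (x p + t)

theorem weightedMomentum_sub_weightedMomentum {n : ℕ} (m c x y : Fin n → ℝ) (t : ℝ) :
    weightedMomentum m c x t - weightedMomentum m c y t = ∑ p, c p * m p * (x p - y p) := by
  rw [weightedMomentum, weightedMomentum, ← Finset.sum_sub_distrib]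
  congr 1 with p
  ring

theorem weightedMomentum_collMat_mulVec_sub {n i : ℕ} (hi : i + 1 < n) (m c x : Fin n → ℝ)
    (t : ℝ) (hm : m ⟨i, by omega⟩ + m ⟨i + 1, hi⟩ ≠ 0) :
    weightedMomentum m c (collMat n i ((m ⟨i, by omega⟩ - m ⟨i + 1, hi⟩) /
        (m ⟨i, by omega⟩ + m ⟨i + 1, hi⟩)) *ᵥ x) t - weightedMomentum m c x t =
      2 * (m ⟨i, by omega⟩ * m ⟨i + 1, hi⟩ / (m ⟨i, by omega⟩ + m ⟨i + 1, hi⟩)) *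
        (x ⟨i, by omega⟩ - x ⟨i + 1, hi⟩) * (c ⟨i + 1, hi⟩ - c ⟨i, by omega⟩) := by
  rw [weightedMomentum_sub_weightedMomentum,
    Fintype.sum_eq_add ⟨i, by omega⟩ ⟨i + 1, hi⟩ (by simp [Fin.ext_iff])]
  · rw [collMat_mulVec_left _ _ hi, collMat_mulVec_right _ _ hi]
    field_simp
    ring
  · rintro q ⟨h0, h1⟩
    rw [collMat_mulVec_of_ne _ _ (Fin.val_ne_iff.2 h0) (Fin.val_ne_iff.2 h1), sub_self,
      mul_zero]

theorem tendsto_weightedMomentum {n : ℕ} (m c : Fin n → ℝ) {f : ℝ → Fin n → ℝ} {l : Filter ℝ}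
    {x : Fin n → ℝ} {t : ℝ} (hf : ∀ p, Tendsto (fun s => f s p) l (𝓝 (x p)))
    (hl : l ≤ 𝓝 t) :
    Tendsto (fun s => weightedMomentum m c (f s) s) l (𝓝 (weightedMomentum m c x t)) :=
  tendsto_finsetSum _ fun p _ => ((hf p).add (tendsto_id.mono_left hl)).const_mul _

def tailIndicator {n : ℕ} (j : ℕ) (p : Fin n) : ℝ :=
  if j ≤ (p : ℕ) then 1 else 0

theorem tailIndicator_nonneg {n : ℕ} (j : ℕ) : 0 ≤ (tailIndicator j : Fin n → ℝ) := fun p => by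
  unfold tailIndicator
  split_ifs <;> norm_num

theorem monotone_tailIndicator {n : ℕ} (j : ℕ) : Monotone (tailIndicator j : Fin n → ℝ) := by
  intro p q hpq
  by_cases hq : j ≤ (q : ℕ)
  · simp only [tailIndicator, hq, if_true]
    split_ifs <;> norm_num
  · have hp : ¬j ≤ (p : ℕ) := fun hp => hq (hp.trans (show (p : ℕ) ≤ q from hpq))
    simp [tailIndicator, hp, hq]

theorem weightedMomentum_tailIndicator_sub_succ {n i : ℕ} (hi : i < n) (m x : Fin n → ℝ)
    (t : ℝ) :
    weightedMomentum m (tailIndicator i) x t - weightedMomentum m (tailIndicator (i + 1)) x t =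
      m ⟨i, hi⟩ * (x ⟨i, hi⟩ + t) := by
  rw [weightedMomentum, weightedMomentum, ← Finset.sum_sub_distrib,
    Fintype.sum_eq_single ⟨i, hi⟩]
  · simp [tailIndicator]
  · intro q hq
    have hq' : (q : ℕ) ≠ i := Fin.val_ne_iff.2 hq
    simp only [tailIndicator]
    split_ifs <;> first | omega | ring

namespace AccumDatum

variable {n : ℕ} {m : Fin n → ℝ} (D : AccumDatum n m) {c : Fin n → ℝ}

theorem tc_nonneg (k : ℕ) : 0 ≤ D.tc k :=
  D.tc_pos.le.trans (D.tc_mono.monotone k.zero_le)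

theorem exists_lt_tc {t : ℝ} (ht : t < D.t0) : ∃ k, t < D.tc k :=
  (D.tc_lim.eventually (lt_mem_nhds ht)).exists

theorem hasDerivAt_weightedMomentum {t : ℝ} (h0 : 0 < t) (ht : t < D.t0)
    (hnc : t ∉ range D.tc) :
    HasDerivAt (fun s => weightedMomentum m c (D.v s) s) 0 t := by
  have h := HasDerivWithinAt.fun_sum (u := Finset.univ) fun p _ =>
    ((D.v_deriv t h0.le ht hnc p).add (hasDerivWithinAt_id t _)).const_mul (c p * m p)
  simp only [neg_add_cancel, mul_zero, Finset.sum_const_zero] at h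
  exact h.hasDerivAt (Ico_mem_nhds h0 ht)

theorem weightedMomentum_eq_of_forall_tc_notMem {s t : ℝ} (h0 : 0 ≤ s) (hst : s ≤ t)
    (ht : t < D.t0) (hfree : ∀ k, D.tc k ∉ Ioc s t) :
    weightedMomentum m c (D.v t) t = weightedMomentum m c (D.v s) s := by
  rcases hst.eq_or_lt with rfl | hst
  · rfl
  have hderiv : ∀ x ∈ Ioc s t, HasDerivAt (fun s => weightedMomentum m c (D.v s) s) 0 x :=
    fun x hx => D.hasDerivAt_weightedMomentum (h0.trans_lt hx.1) (hx.2.trans_lt ht)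
      (by rintro ⟨k, rfl⟩; exact hfree k hx)
  have hcont : ContinuousOn (fun s => weightedMomentum m c (D.v s) s) (Icc s t) := by
    intro x hx
    rcases hx.1.eq_or_lt with hsx | hsx
    · rw [← hsx]
      exact (tendsto_weightedMomentum m c (fun p => D.v_rc s h0 (hst.trans ht) p)
          nhdsWithin_le_nhds).mono_left (nhdsWithin_mono _ Icc_subset_Ici_self)
    · exact (hderiv x ⟨hsx, hx.2⟩).continuousAt.continuousWithinAt
  obtain ⟨x, -, hx⟩ := exists_hasDerivAt_eq_slope _ (fun _ => (0 : ℝ)) hst hcont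
    fun x hx => hderiv x (Ioo_subset_Ioc_self hx)
  rw [eq_comm, div_eq_zero_iff, sub_eq_zero, sub_eq_zero] at hx
  exact hx.resolve_right hst.ne'

theorem weightedMomentum_eq_of_mem_Ico {k : ℕ} {t : ℝ} (ht : t ∈ Ico (D.tc k) (D.tc (k + 1))) :
    weightedMomentum m c (D.v t) t = weightedMomentum m c (D.v (D.tc k)) (D.tc k) := by
  refine D.weightedMomentum_eq_of_forall_tc_notMem (D.tc_nonneg k) ht.1
    (ht.2.trans (D.tc_lt _)) fun j hj => ?_
  have hkj : k < j := D.tc_mono.lt_iff_lt.1 hj.1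
  have hjk : j < k + 1 := D.tc_mono.lt_iff_lt.1 (hj.2.trans_lt ht.2)
  omega

theorem weightedMomentum_vminus_le (hc0 : 0 ≤ c) (hc : Monotone c) (k : ℕ) :
    weightedMomentum m c (D.vminus k) (D.tc k) ≤
      weightedMomentum m c (D.v (D.tc k)) (D.tc k) := by
  rw [← sub_nonneg]
  rcases hty : D.ty k with _ | i
  · obtain ⟨-, hneg, hv0, hrest⟩ := D.coll_floor k hty
    rw [weightedMomentum_sub_weightedMomentum,
      Fintype.sum_eq_single _ fun p hp => by rw [hrest p hp, sub_self, mul_zero], hv0]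
    exact mul_nonneg (mul_nonneg (hc0 _) (D.hm _).le) (by linarith)
  · have hi : i + 1 < n := by have := D.ty_le k; have := D.ha; have := D.hn; omega
    obtain ⟨-, hgt, hv⟩ := D.coll_pair k i hi hty
    have hm0 := D.hm ⟨i, by omega⟩
    have hm1 := D.hm ⟨i + 1, hi⟩
    rw [hv, weightedMomentum_collMat_mulVec_sub hi _ _ _ _ (by positivity)]
    exact mul_nonneg (mul_nonneg (by positivity) (sub_nonneg.2 hgt.le))
      (sub_nonneg.2 (hc (Fin.mk_le_mk.2 (Nat.le_succ i))))

theorem weightedMomentum_tc_le_succ (hc0 : 0 ≤ c) (hc : Monotone c) (k : ℕ) :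
    weightedMomentum m c (D.v (D.tc k)) (D.tc k) ≤
      weightedMomentum m c (D.v (D.tc (k + 1))) (D.tc (k + 1)) := by
  have hconst : Tendsto (fun s => weightedMomentum m c (D.v s) s) (𝓝[<] D.tc (k + 1))
      (𝓝 (weightedMomentum m c (D.v (D.tc k)) (D.tc k))) := by
    refine tendsto_const_nhds.congr' ?_
    filter_upwards [Ioo_mem_nhdsLT (D.tc_mono (Nat.lt_succ_self k))] with t ht
    exact (D.weightedMomentum_eq_of_mem_Ico ⟨ht.1.le, ht.2⟩).symm
  have hleft := tendsto_weightedMomentum m c (D.v_ll (k + 1)) nhdsWithin_le_nhds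
  rw [tendsto_nhds_unique hconst hleft]
  exact D.weightedMomentum_vminus_le hc0 hc (k + 1)

theorem monotoneOn_weightedMomentum (hc0 : 0 ≤ c) (hc : Monotone c) :
    MonotoneOn (fun t => weightedMomentum m c (D.v t) t) (Ico (D.tc 0) D.t0) :=
  monotoneOn_Ico_of_eqOn_Ico_of_le_succ D.tc_mono.monotone (fun _ => D.exists_lt_tc)
    (fun _ _ => D.weightedMomentum_eq_of_mem_Ico) (D.weightedMomentum_tc_le_succ hc0 hc)

theorem weightedMomentum_le (hc0 : 0 ≤ c) {t : ℝ} (h0 : 0 ≤ t) (ht : t < D.t0) :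
    weightedMomentum m c (D.v t) t ≤ ∑ p, c p * m p * (D.C + D.t0) := by
  refine Finset.sum_le_sum fun p _ => mul_le_mul_of_nonneg_left ?_ ?_
  · linarith [le_of_abs_le (D.v_bdd t h0 ht p)]
  · exact mul_nonneg (hc0 p) (D.hm p).le

theorem exists_tendsto_weightedMomentum (hc0 : 0 ≤ c) (hc : Monotone c) :
    ∃ L, Tendsto (fun t => weightedMomentum m c (D.v t) t) (𝓝[<] D.t0) (𝓝 L) := by
  have hne : (Ioo (D.tc 0) D.t0).Nonempty := nonempty_Ioo.2 (D.tc_lt 0)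
  have hbdd : BddAbove ((fun t => weightedMomentum m c (D.v t) t) '' Ioo (D.tc 0) D.t0) := by
    refine ⟨∑ p, c p * m p * (D.C + D.t0), ?_⟩
    rintro _ ⟨t, ht, rfl⟩
    exact D.weightedMomentum_le hc0 ((D.tc_nonneg 0).trans ht.1.le) ht.2
  exact ⟨_, MonotoneOn.tendsto_nhdsWithin_Ioo_left hne
    ((D.monotoneOn_weightedMomentum hc0 hc).mono Ioo_subset_Ico_self) hbdd⟩

end AccumDatum

/-- Lemma A.2: given an accumulating collision datum, for every (0-based)
particle index `i ≤ a` the left limit `lim_{t → t₀⁻} v_i(t)` exists. -/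
theorem accum_velocity_left_limit (n : ℕ) (m : Fin n → ℝ) (D : AccumDatum n m) :
    ∀ i : ℕ, ∀ hi : i < n, i ≤ D.a →
      ∃ L : ℝ, Tendsto (fun t => D.v t ⟨i, hi⟩)
        (nhdsWithin D.t0 (Iio D.t0)) (nhds L) := by
  intro i hi _
  obtain ⟨L, hL⟩ := D.exists_tendsto_weightedMomentum (tailIndicator_nonneg i)
    (monotone_tailIndicator i)
  obtain ⟨L', hL'⟩ := D.exists_tendsto_weightedMomentum (tailIndicator_nonneg (i + 1))
    (monotone_tailIndicator (i + 1))
  refine ⟨(L - L') / m ⟨i, hi⟩ - D.t0, ((hL.sub hL').div_const _).sub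
    (tendsto_id.mono_left nhdsWithin_le_nhds) |>.congr fun t => ?_⟩
  rw [weightedMomentum_tailIndicator_sub_succ hi, mul_div_cancel_left₀ _ (D.hm _).ne', id,
    add_sub_cancel_right]
end

section
/- Given an accumulating collision datum, for every index i with 1 ≤ i ≤ a+1 one has lim_{t → t₀⁻} v_i(t) = 0 and lim_{t → t₀⁻} q_i(t) = 0. -/
open Matrix Filter Set

/-!
Between collisions every `vⱼ + t` is constant. Index the particles `1, …, n` and write
`P = ∑ⱼ j mⱼ vⱼ = ∑ᵢ ∑_{j ≥ i} mⱼ vⱼ`, the sum of the momenta of the stacks `{i, …, n}`. A floor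
collision, or a collision of particles `i` and `i + 1`, changes only one of these stack momenta
(every other stack contains both colliding particles or neither), and raises it by at least
`mⱼ |Δvⱼ|` for every `j`. Hence `∑ₗ l mₗ (vₗ + t) ± mⱼ (vⱼ + t)` are nondecreasing and bounded,
so every `vⱼ` has a limit at `t₀`; likewise `C t - qⱼ` is nondecreasing and bounded above since
`qⱼ ≥ 0`, so every `qⱼ` has a limit. Floor collisions recurring up to `t₀` force
`lim v₁ = -lim v₁` and `lim q₁ = 0`; recurring collisions of particles `i` and `i + 1` force
`lim qᵢ = lim qᵢ₊₁` and, since such a collision reverses `vᵢ - vᵢ₊₁`, `lim vᵢ = lim vᵢ₊₁`.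
-/

section Monotone

variable {α β : Type*} [LinearOrder α] [Preorder β] {f : α → β}

theorem monotoneOn_Icc_of_monotoneOn_Icc_succ {τ : ℕ → α} (hτ : Monotone τ)
    (hf : ∀ k, MonotoneOn f (Icc (τ k) (τ (k + 1)))) (k : ℕ) :
    MonotoneOn f (Icc (τ 0) (τ k)) := by
  induction k with
  | zero => simp
  | succ k ih =>
    rw [← Icc_union_Icc_eq_Icc (hτ k.zero_le) (hτ k.le_succ)]
    exact ih.union_right (hf k) (isGreatest_Icc (hτ k.zero_le)) (isLeast_Icc (hτ k.le_succ))

theorem monotoneOn_Ico_of_monotoneOn_Icc_succ [TopologicalSpace α] [OrderTopology α]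
    {τ : ℕ → α} {T : α} (hτ : Monotone τ) (hlim : Tendsto τ atTop (nhds T))
    (hf : ∀ k, MonotoneOn f (Icc (τ k) (τ (k + 1)))) : MonotoneOn f (Ico (τ 0) T) := by
  intro s hs t ht hst
  obtain ⟨k, hk⟩ := (hlim.eventually (eventually_gt_nhds ht.2)).exists
  exact monotoneOn_Icc_of_monotoneOn_Icc_succ hτ hf k ⟨hs.1, hst.trans hk.le⟩
    ⟨hs.1.trans hst, hk.le⟩ hst

theorem monotoneOn_Icc_of_eqOn_Ico {a b : α} (hconst : ∀ t ∈ Ico a b, f t = f a)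
    (hab : f a ≤ f b) : MonotoneOn f (Icc a b) := by
  intro s hs t ht hst
  rcases ht.2.lt_or_eq with htb | rfl
  · rw [hconst s ⟨hs.1, hst.trans_lt htb⟩, hconst t ⟨ht.1, htb⟩]
  rcases hs.2.lt_or_eq with hsb | rfl
  · rwa [hconst s ⟨hs.1, hsb⟩]
  · rfl

end Monotone

theorem exists_tendsto_nhdsLT_of_monotoneOn {α β : Type*} [LinearOrder α] [TopologicalSpace α]
    [OrderTopology α] [DenselyOrdered α] [ConditionallyCompleteLinearOrder β] [TopologicalSpace β]
    [OrderTopology β]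
    {f : α → β} {a T : α} {B : β} (haT : a < T) (hf : MonotoneOn f (Ioo a T))
    (hB : ∀ t ∈ Ioo a T, f t ≤ B) : ∃ L, Tendsto f (nhdsWithin T (Iio T)) (nhds L) :=
  ⟨_, hf.tendsto_nhdsWithin_Ioo_left (nonempty_Ioo.2 haT) ⟨B, by
    rintro _ ⟨t, ht, rfl⟩
    exact hB t ht⟩⟩

theorem collMat_mulVec_sub_self {n i : ℕ} (hi : i + 1 < n) (γ : ℝ) (w : Fin n → ℝ) :
    collMat n i γ *ᵥ w - w =
      (w ⟨i, by omega⟩ - w ⟨i + 1, hi⟩) •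
        (Pi.single ⟨i, by omega⟩ (γ - 1) + Pi.single ⟨i + 1, hi⟩ (1 + γ)) := by
  ext ⟨j, hj⟩
  simp only [Pi.sub_apply, mulVec, dotProduct, collMat, of_apply, Pi.smul_apply, Pi.add_apply,
    Pi.single_apply, Fin.ext_iff, smul_eq_mul]
  by_cases hji : j = i
  · subst hji
    rw [Fintype.sum_eq_add ⟨j, by omega⟩ ⟨j + 1, hi⟩ (by simp [Fin.ext_iff])
      (by rintro ⟨k, hk⟩ ⟨h1, h2⟩; simp_all [Fin.ext_iff]; omega)]
    simp only [and_self, ↓reduceIte, Nat.add_eq_left, one_ne_zero, and_false, Nat.left_eq_add,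
      add_zero]
    ring
  by_cases hji' : j = i + 1
  · subst hji'
    rw [Fintype.sum_eq_add ⟨i, by omega⟩ ⟨i + 1, hi⟩ (by simp [Fin.ext_iff])
      (by rintro ⟨k, hk⟩ ⟨h1, h2⟩; simp_all [Fin.ext_iff]; omega)]
    simp only [Nat.add_eq_left, one_ne_zero, and_true, ↓reduceIte, Nat.left_eq_add, and_self,
      and_false, neg_mul, zero_add]
    ring
  · rw [Fintype.sum_eq_single ⟨j, hj⟩ (fun k hk => by simp_all [Fin.ext_iff]; omega)]
    simp [hji, hji']

def momentumWeight {n : ℕ} (m : Fin n → ℝ) : Fin n → ℝ := fun j => ((j : ℝ) + 1) * m j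

namespace AccumDatum

variable {n : ℕ} {m : Fin n → ℝ} (D : AccumDatum n m)

def vShift (t : ℝ) : Fin n → ℝ := fun j => D.v t j + t

def jump (k : ℕ) : Fin n → ℝ := D.v (D.tc k) - D.vminus k

theorem n_pos (D : AccumDatum n m) : 0 < n := by
  have := D.hn
  omega

theorem zero_lt_tc (k : ℕ) : 0 < D.tc k :=
  D.tc_pos.trans_le (D.tc_mono.monotone k.zero_le)

theorem tc_tendsto_nhdsLT : Tendsto D.tc atTop (nhdsWithin D.t0 (Iio D.t0)) :=
  tendsto_nhdsWithin_iff.2 ⟨D.tc_lim, .of_forall D.tc_lt⟩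

theorem frequently_ty_eq {i : ℕ} (hi : i ≤ D.a) : ∃ᶠ k in atTop, D.ty k = i :=
  frequently_atTop.2 (D.ty_inf i hi)

theorem zero_le_q {t : ℝ} (ht0 : 0 ≤ t) (ht : t < D.t0) (j : Fin n) : 0 ≤ D.q t j :=
  (D.q_nonneg t ht0 ht).trans (D.q_mono t ht0 ht _ j (Nat.zero_le _))

theorem notMem_range_tc {k : ℕ} {t : ℝ} (ht : t ∈ Ioo (D.tc k) (D.tc (k + 1))) :
    t ∉ range D.tc := by
  rintro ⟨l, rfl⟩
  have h1 := D.tc_mono.lt_iff_lt.1 ht.1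
  have h2 := D.tc_mono.lt_iff_lt.1 ht.2
  omega

theorem Ico_zero_t0_mem_nhds {t : ℝ} (ht0 : 0 < t) (ht : t < D.t0) : Ico 0 D.t0 ∈ nhds t :=
  mem_of_superset (Ioo_mem_nhds ht0 ht) Ioo_subset_Ico_self

theorem hasDerivAt_v {t : ℝ} (ht0 : 0 < t) (ht : t < D.t0) (htc : t ∉ range D.tc) (j : Fin n) :
    HasDerivAt (fun s => D.v s j) (-1) t :=
  (D.v_deriv t ht0.le ht htc j).hasDerivAt (D.Ico_zero_t0_mem_nhds ht0 ht)

theorem hasDerivAt_q {t : ℝ} (ht0 : 0 < t) (ht : t < D.t0) (htc : t ∉ range D.tc) (j : Fin n) :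
    HasDerivAt (fun s => D.q s j) (D.v t j) t :=
  (D.q_deriv t ht0.le ht htc j).hasDerivAt (D.Ico_zero_t0_mem_nhds ht0 ht)

theorem v_eq_of_mem_Ico {k : ℕ} {t : ℝ} (ht : t ∈ Ico (D.tc k) (D.tc (k + 1))) (j : Fin n) :
    D.v t j = D.v (D.tc k) j - (t - D.tc k) := by
  rcases ht.1.eq_or_lt with rfl | hkt
  · ring
  have hderiv : ∀ x ∈ Ioc (D.tc k) t, HasDerivAt (fun s => D.v s j) (-1) x := fun x hx =>
    D.hasDerivAt_v ((D.zero_lt_tc k).trans hx.1) ((hx.2.trans_lt ht.2).trans (D.tc_lt _))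
      (D.notMem_range_tc ⟨hx.1, hx.2.trans_lt ht.2⟩) j
  have hcont : ContinuousOn (fun s => D.v s j) (Icc (D.tc k) t) := by
    intro x hx
    rcases hx.1.eq_or_lt with rfl | hkx
    · exact (D.v_rc _ (D.zero_lt_tc k).le (D.tc_lt k) j).mono_left
        (nhdsWithin_mono _ Icc_subset_Ici_self)
    · exact (hderiv x ⟨hkx, hx.2⟩).continuousAt.continuousWithinAt
  obtain ⟨c, -, hc⟩ := exists_hasDerivAt_eq_slope (fun s => D.v s j) (fun _ => -1) hkt hcont
    fun x hx => hderiv x ⟨hx.1, hx.2.le⟩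
  rw [eq_div_iff (sub_ne_zero.2 hkt.ne')] at hc
  linarith

theorem vShift_eq_of_mem_Ico {k : ℕ} {t : ℝ} (ht : t ∈ Ico (D.tc k) (D.tc (k + 1))) :
    D.vShift t = D.vShift (D.tc k) := by
  ext j
  simp only [vShift, D.v_eq_of_mem_Ico ht j]
  ring

theorem vminus_succ (k : ℕ) (j : Fin n) :
    D.vminus (k + 1) j = D.v (D.tc k) j - (D.tc (k + 1) - D.tc k) := by
  refine tendsto_nhds_unique (D.v_ll (k + 1) j)
    (Tendsto.congr' (f₁ := fun t => D.v (D.tc k) j - (t - D.tc k)) ?_ ?_)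
  · filter_upwards [Ioo_mem_nhdsLT (D.tc_mono k.lt_succ_self)] with t ht
    exact (D.v_eq_of_mem_Ico ⟨ht.1.le, ht.2⟩ j).symm
  · exact ((continuous_const.sub (continuous_id.sub continuous_const)).tendsto _).mono_left
      nhdsWithin_le_nhds

theorem vShift_succ (k : ℕ) : D.vShift (D.tc (k + 1)) = D.vShift (D.tc k) + D.jump (k + 1) := by
  ext j
  simp only [vShift, jump, Pi.add_apply, Pi.sub_apply, D.vminus_succ k j]
  ring

theorem tendsto_vminus {j : Fin n} {L : ℝ}
    (h : Tendsto (fun t => D.v t j) (nhdsWithin D.t0 (Iio D.t0)) (nhds L)) :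
    Tendsto (fun k => D.vminus k j) atTop (nhds L) := by
  rw [← tendsto_add_atTop_iff_nat 1]
  have := (h.comp D.tc_tendsto_nhdsLT).sub
    ((D.tc_lim.comp (tendsto_add_atTop_nat 1)).sub D.tc_lim)
  rw [sub_self, sub_zero] at this
  exact this.congr fun k => (D.vminus_succ k j).symm

theorem jump_of_ty_eq_zero {k : ℕ} (hk : D.ty k = 0) :
    D.jump k = Pi.single ⟨0, D.n_pos⟩ (-2 * D.vminus k ⟨0, D.n_pos⟩) := by
  obtain ⟨-, -, h0, hother⟩ := D.coll_floor k hk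
  ext j
  by_cases hj : j = ⟨0, D.n_pos⟩
  · subst hj
    simp only [jump, Pi.sub_apply, h0, Pi.single_eq_same]
    ring
  · simp [jump, hother j hj, hj]

theorem jump_of_ty_eq_succ {k i : ℕ} (hi : i + 1 < n) (hk : D.ty k = i + 1) :
    D.jump k = (2 * (D.vminus k ⟨i, by omega⟩ - D.vminus k ⟨i + 1, hi⟩) /
        (m ⟨i, by omega⟩ + m ⟨i + 1, hi⟩)) •
      (Pi.single ⟨i, by omega⟩ (-m ⟨i + 1, hi⟩) + Pi.single ⟨i + 1, hi⟩ (m ⟨i, by omega⟩)) := by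
  obtain ⟨-, -, hv⟩ := D.coll_pair k i hi hk
  have hpos : 0 < m ⟨i, by omega⟩ + m ⟨i + 1, hi⟩ := add_pos (D.hm _) (D.hm _)
  rw [jump, hv, collMat_mulVec_sub_self hi]
  ext j
  simp only [Pi.smul_apply, Pi.add_apply, Pi.single_apply, smul_eq_mul]
  split_ifs <;> field_simp <;> ring

theorem mul_abs_jump_le_of_ty_eq_zero {k : ℕ} (hk : D.ty k = 0) (j : Fin n) :
    m j * |D.jump k j| ≤ momentumWeight m ⬝ᵥ D.jump k := by
  have hneg := (D.coll_floor k hk).2.1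
  rw [D.jump_of_ty_eq_zero hk, dotProduct_single]
  by_cases hj : j = ⟨0, D.n_pos⟩
  · subst hj
    simp only [Pi.single_eq_same, momentumWeight, Nat.cast_zero, zero_add, one_mul]
    rw [abs_of_pos (by linarith)]
  · simp only [Pi.single_apply, hj, if_false, abs_zero, mul_zero, momentumWeight,
      Nat.cast_zero, zero_add, one_mul]
    exact (mul_pos (D.hm _) (by linarith)).le

theorem mul_abs_jump_le_of_ty_eq_succ {k i : ℕ} (hi : i + 1 < n) (hk : D.ty k = i + 1)
    (j : Fin n) : m j * |D.jump k j| ≤ momentumWeight m ⬝ᵥ D.jump k := by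
  have hgt := (D.coll_pair k i hi hk).2.1
  have hjump := D.jump_of_ty_eq_succ hi hk
  set a : Fin n := ⟨i, by omega⟩
  set b : Fin n := ⟨i + 1, hi⟩
  set s := 2 * (D.vminus k a - D.vminus k b) / (m a + m b)
  have hma := D.hm a
  have hmb := D.hm b
  have hs : 0 < s := div_pos (by linarith) (by linarith)
  have hwa : momentumWeight m a = (i + 1) * m a := rfl
  have hwb : momentumWeight m b = (i + 2) * m b := by
    simp only [momentumWeight, b, Nat.cast_add, Nat.cast_one]
    ring
  have hj : m j * |(Pi.single a (-m b) + Pi.single b (m a) : Fin n → ℝ) j| ≤ m a * m b := by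
    have hab : a ≠ b := by simp [a, b, Fin.ext_iff]
    by_cases hja : j = a
    · subst hja
      simp [hab, abs_of_pos hmb]
    by_cases hjb : j = b
    · subst hjb
      simp [hab.symm, abs_of_pos hma, mul_comm]
    · simp only [Pi.add_apply, Pi.single_apply, hja, hjb, if_false, add_zero, abs_zero,
        mul_zero]
      positivity
  rw [hjump, dotProduct_smul, dotProduct_add, dotProduct_single, dotProduct_single, hwa, hwb,
    Pi.smul_apply, smul_eq_mul, smul_eq_mul, abs_mul, abs_of_pos hs]
  nlinarith

theorem mul_abs_jump_le (k : ℕ) (j : Fin n) :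
    m j * |D.jump k j| ≤ momentumWeight m ⬝ᵥ D.jump k := by
  rcases Nat.eq_zero_or_eq_succ_pred (D.ty k) with hk | hk
  · exact D.mul_abs_jump_le_of_ty_eq_zero hk j
  · have := D.ty_le k
    have := D.ha
    exact D.mul_abs_jump_le_of_ty_eq_succ (by omega) hk j

theorem v_sub_v_of_ty_eq_succ {k i : ℕ} (hi : i + 1 < n) (hk : D.ty k = i + 1) :
    D.v (D.tc k) ⟨i, by omega⟩ - D.v (D.tc k) ⟨i + 1, hi⟩ =
      D.vminus k ⟨i + 1, hi⟩ - D.vminus k ⟨i, by omega⟩ := by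
  have hjump := D.jump_of_ty_eq_succ hi hk
  have ha := congrFun hjump ⟨i, by omega⟩
  have hb := congrFun hjump ⟨i + 1, hi⟩
  have hpos : 0 < m ⟨i, by omega⟩ + m ⟨i + 1, hi⟩ := add_pos (D.hm _) (D.hm _)
  simp only [jump, Pi.sub_apply, Pi.smul_apply, Pi.add_apply, Pi.single_eq_same, ne_eq,
    Fin.ext_iff, Nat.left_eq_add, one_ne_zero, not_false_eq_true, Pi.single_eq_of_ne, add_zero,
    smul_eq_mul, mul_neg, Nat.add_eq_left, zero_add] at ha hb
  field_simp at ha hb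
  apply mul_right_cancel₀ hpos.ne'
  linear_combination ha - hb

theorem monotoneOn_dotProduct_vShift (c : Fin n → ℝ) (hc : ∀ k, 0 ≤ c ⬝ᵥ D.jump k) :
    MonotoneOn (fun t => c ⬝ᵥ D.vShift t) (Ico (D.tc 0) D.t0) :=
  monotoneOn_Ico_of_monotoneOn_Icc_succ D.tc_mono.monotone D.tc_lim fun k =>
    monotoneOn_Icc_of_eqOn_Ico (fun _ ht => by rw [D.vShift_eq_of_mem_Ico ht])
      (by rw [D.vShift_succ, dotProduct_add]; linarith [hc (k + 1)])

theorem dotProduct_vShift_le (c : Fin n → ℝ) {t : ℝ} (ht0 : 0 ≤ t) (ht : t < D.t0) :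
    c ⬝ᵥ D.vShift t ≤ ∑ j, |c j| * (D.C + D.t0) := by
  refine Finset.sum_le_sum fun j _ => (le_abs_self _).trans ?_
  rw [abs_mul]
  refine mul_le_mul_of_nonneg_left ((abs_add_le _ _).trans ?_) (abs_nonneg _)
  rw [abs_of_nonneg ht0]
  linarith [D.v_bdd t ht0 ht j]

theorem exists_tendsto_dotProduct_vShift (c : Fin n → ℝ) (hc : ∀ k, 0 ≤ c ⬝ᵥ D.jump k) :
    ∃ L, Tendsto (fun t => c ⬝ᵥ D.vShift t) (nhdsWithin D.t0 (Iio D.t0)) (nhds L) :=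
  exists_tendsto_nhdsLT_of_monotoneOn (D.tc_lt 0)
    ((D.monotoneOn_dotProduct_vShift c hc).mono Ioo_subset_Ico_self)
    fun _ ht => D.dotProduct_vShift_le c ((D.zero_lt_tc 0).le.trans ht.1.le) ht.2

theorem exists_tendsto_v (j : Fin n) :
    ∃ L, Tendsto (fun t => D.v t j) (nhdsWithin D.t0 (Iio D.t0)) (nhds L) := by
  have hjump : ∀ k, |m j * D.jump k j| ≤ momentumWeight m ⬝ᵥ D.jump k := fun k => by
    rw [abs_mul, abs_of_pos (D.hm j)]
    exact D.mul_abs_jump_le k j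
  obtain ⟨Lplus, hplus⟩ := D.exists_tendsto_dotProduct_vShift
    (momentumWeight m + Pi.single j (m j))
    fun k => by rw [add_dotProduct, single_dotProduct]; linarith [abs_le.1 (hjump k)]
  obtain ⟨Lminus, hminus⟩ := D.exists_tendsto_dotProduct_vShift
    (momentumWeight m - Pi.single j (m j))
    fun k => by rw [sub_dotProduct, single_dotProduct]; linarith [abs_le.1 (hjump k)]
  refine ⟨(Lplus - Lminus) / (2 * m j) - D.t0, (((hplus.sub hminus).div_const _).sub
    (tendsto_id.mono_left nhdsWithin_le_nhds)).congr fun t => ?_⟩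
  have := D.hm j
  simp only [add_dotProduct, sub_dotProduct, single_dotProduct, vShift, id]
  field_simp
  ring

theorem monotoneOn_mul_sub_q (j : Fin n) :
    MonotoneOn (fun t => D.C * t - D.q t j) (Ico (D.tc 0) D.t0) := by
  refine monotoneOn_Ico_of_monotoneOn_Icc_succ D.tc_mono.monotone D.tc_lim fun k => ?_
  have hsub : Icc (D.tc k) (D.tc (k + 1)) ⊆ Ico 0 D.t0 :=
    fun t ht => ⟨(D.zero_lt_tc k).le.trans ht.1, ht.2.trans_lt (D.tc_lt _)⟩
  refine monotoneOn_of_hasDerivWithinAt_nonneg (f' := fun t => D.C - D.v t j) (convex_Icc _ _)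
    ((continuousOn_const.mul continuousOn_id).sub ((D.q_cont j).mono hsub))
    (fun t ht => ?_) fun t ht => ?_ <;> rw [interior_Icc] at ht
  · exact (((hasDerivAt_id t).const_mul D.C).sub (D.hasDerivAt_q ((D.zero_lt_tc k).trans ht.1)
      (ht.2.trans (D.tc_lt _)) (D.notMem_range_tc ht) j)).hasDerivWithinAt.congr_deriv (by ring)
  · have := D.v_bdd t ((D.zero_lt_tc k).trans ht.1).le (ht.2.trans (D.tc_lt _)) j
    linarith [le_abs_self (D.v t j)]

theorem exists_tendsto_q (j : Fin n) :
    ∃ Q, Tendsto (fun t => D.q t j) (nhdsWithin D.t0 (Iio D.t0)) (nhds Q) := by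
  obtain ⟨L, hL⟩ := exists_tendsto_nhdsLT_of_monotoneOn (B := D.C * D.t0) (D.tc_lt 0)
    ((D.monotoneOn_mul_sub_q j).mono Ioo_subset_Ico_self) fun t ht => by
      have := D.zero_le_q ((D.zero_lt_tc 0).le.trans ht.1.le) ht.2 j
      nlinarith [D.C_pos, ht.2]
  exact ⟨D.C * D.t0 - L, (((tendsto_id.mono_left nhdsWithin_le_nhds).const_mul D.C).sub hL).congr
    fun t => by simp⟩

theorem v_limit_eq_zero {L : ℝ}
    (h : Tendsto (fun t => D.v t ⟨0, D.n_pos⟩) (nhdsWithin D.t0 (Iio D.t0)) (nhds L)) :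
    L = 0 := by
  have := tendsto_nhds_unique_of_frequently_eq (h.comp D.tc_tendsto_nhdsLT)
    (D.tendsto_vminus h).neg ((D.frequently_ty_eq (Nat.zero_le _)).mono fun k hk =>
      (D.coll_floor k hk).2.2.1)
  linarith

theorem q_limit_eq_zero {Q : ℝ}
    (h : Tendsto (fun t => D.q t ⟨0, D.n_pos⟩) (nhdsWithin D.t0 (Iio D.t0)) (nhds Q)) :
    Q = 0 :=
  tendsto_nhds_unique_of_frequently_eq (h.comp D.tc_tendsto_nhdsLT) tendsto_const_nhds
    ((D.frequently_ty_eq (Nat.zero_le _)).mono fun k hk => (D.coll_floor k hk).1)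

theorem v_limit_eq_of_succ {i : ℕ} (hi : i + 1 < n) (hia : i + 1 ≤ D.a) {L L' : ℝ}
    (h : Tendsto (fun t => D.v t ⟨i, by omega⟩) (nhdsWithin D.t0 (Iio D.t0)) (nhds L))
    (h' : Tendsto (fun t => D.v t ⟨i + 1, hi⟩) (nhdsWithin D.t0 (Iio D.t0)) (nhds L')) :
    L = L' := by
  have := tendsto_nhds_unique_of_frequently_eq
    ((h.comp D.tc_tendsto_nhdsLT).sub (h'.comp D.tc_tendsto_nhdsLT))
    ((D.tendsto_vminus h').sub (D.tendsto_vminus h))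
    ((D.frequently_ty_eq hia).mono fun k hk => D.v_sub_v_of_ty_eq_succ hi hk)
  linarith

theorem q_limit_eq_of_succ {i : ℕ} (hi : i + 1 < n) (hia : i + 1 ≤ D.a) {Q Q' : ℝ}
    (h : Tendsto (fun t => D.q t ⟨i, by omega⟩) (nhdsWithin D.t0 (Iio D.t0)) (nhds Q))
    (h' : Tendsto (fun t => D.q t ⟨i + 1, hi⟩) (nhdsWithin D.t0 (Iio D.t0)) (nhds Q')) :
    Q = Q' :=
  tendsto_nhds_unique_of_frequently_eq (h.comp D.tc_tendsto_nhdsLT) (h'.comp D.tc_tendsto_nhdsLT)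
    ((D.frequently_ty_eq hia).mono fun k hk => (D.coll_pair k i hi hk).1)

end AccumDatum

/-- given an accumulating collision datum, for every (0-based) particle
index `i ≤ a` one has `lim_{t → t₀⁻} v_i(t) = 0` and `lim_{t → t₀⁻} q_i(t) = 0`. -/
theorem accum_velocity_position_limit_zero (n : ℕ) (m : Fin n → ℝ) (D : AccumDatum n m) :
    ∀ i : ℕ, ∀ hi : i < n, i ≤ D.a →
      Tendsto (fun t => D.v t ⟨i, hi⟩) (nhdsWithin D.t0 (Iio D.t0)) (nhds 0) ∧
      Tendsto (fun t => D.q t ⟨i, hi⟩) (nhdsWithin D.t0 (Iio D.t0)) (nhds 0) := by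
  choose L hL using D.exists_tendsto_v
  choose Q hQ using D.exists_tendsto_q
  suffices h : ∀ i (hi : i < n), i ≤ D.a → L ⟨i, hi⟩ = 0 ∧ Q ⟨i, hi⟩ = 0 by
    intro i hi hia
    obtain ⟨hLi, hQi⟩ := h i hi hia
    exact ⟨hLi ▸ hL _, hQi ▸ hQ _⟩
  intro i
  induction i with
  | zero => exact fun _ _ => ⟨D.v_limit_eq_zero (hL _), D.q_limit_eq_zero (hQ _)⟩
  | succ i ih =>
    intro hi hia
    obtain ⟨hLi, hQi⟩ := ih (by omega) (by omega)
    exact ⟨(D.v_limit_eq_of_succ hi hia (hL _) (hL _)).symm.trans hLi,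
      (D.q_limit_eq_of_succ hi hia (hQ _) (hQ _)).symm.trans hQi⟩
end

section
/- Given an accumulating collision datum, the total energy of the subsystem of the first a+1 particles is conserved: the function t ↦ Σ_{i=1}^{a+1} ( m_i q_i(t) + (1/2) m_i v_i(t)² ) is constant on [0, t₀). -/
/-!
Between collisions every particle falls freely, so `d/dt (m q + ½ m v²) = m v - m v = 0`.
At a collision the positions are continuous, a floor collision only flips the sign of `v₁`,
and a pair collision `v ↦ R_i v` is elastic: it preserves `m_i v_i² + m_{i+1} v_{i+1}²`.
Since the collision types never exceed `a`, each colliding pair lies inside the subsystem, so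
the subsystem's energy is continuous on `[0, t₀)` with zero derivative off the countable set of
collision times, hence constant.
-/

open Matrix Filter Set

open Topology

theorem eq_of_hasDerivAt_zero_off_countable {E : Type*} [NormedAddCommGroup E]
    [NormedSpace ℝ E] [CompleteSpace E] {f : ℝ → E} {a b : ℝ} {s : Set ℝ} (hs : s.Countable)
    (hc : ContinuousOn f (uIcc a b)) (hd : ∀ x ∈ Ioo (min a b) (max a b) \ s, HasDerivAt f 0 x) :
    f a = f b := by
  have h := MeasureTheory.integral_eq_of_hasDerivAt_off_countable f 0 hs hc hd
    intervalIntegrable_const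
  simp only [Pi.zero_apply, intervalIntegral.integral_zero] at h
  exact (sub_eq_zero.1 h.symm).symm

section collMat

variable {n i : ℕ} (hi : i + 1 < n) (γ : ℝ) (w : Fin n → ℝ)

theorem collMat_mulVec_apply_left :
    (collMat n i γ *ᵥ w) ⟨i, by omega⟩ = γ * w ⟨i, by omega⟩ + (1 - γ) * w ⟨i + 1, hi⟩ := by
  rw [mulVec, dotProduct, Finset.sum_eq_add_of_mem ⟨i, by omega⟩ ⟨i + 1, hi⟩
    (Finset.mem_univ _) (Finset.mem_univ _) (by simp [Fin.ext_iff])]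
  · simp [collMat]
  · intro k _ hk
    have hki : (k : ℕ) ≠ i := fun h => hk.1 (Fin.ext h)
    have hki' : (k : ℕ) ≠ i + 1 := fun h => hk.2 (Fin.ext h)
    simp [collMat, hki, hki', Fin.ext_iff, Ne.symm hki]

theorem collMat_mulVec_apply_right :
    (collMat n i γ *ᵥ w) ⟨i + 1, hi⟩ = (1 + γ) * w ⟨i, by omega⟩ + (-γ) * w ⟨i + 1, hi⟩ := by
  rw [mulVec, dotProduct, Finset.sum_eq_add_of_mem ⟨i, by omega⟩ ⟨i + 1, hi⟩
    (Finset.mem_univ _) (Finset.mem_univ _) (by simp [Fin.ext_iff])]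
  · simp [collMat]
  · intro k _ hk
    have hki : (k : ℕ) ≠ i := fun h => hk.1 (Fin.ext h)
    have hki' : (k : ℕ) ≠ i + 1 := fun h => hk.2 (Fin.ext h)
    simp [collMat, hki, hki', Fin.ext_iff, Ne.symm hki']

theorem collMat_mulVec_apply_of_ne {j : Fin n} (hj : (j : ℕ) ≠ i) (hj' : (j : ℕ) ≠ i + 1) :
    (collMat n i γ *ᵥ w) j = w j := by
  rw [mulVec, dotProduct, Finset.sum_eq_single j]
  · simp [collMat, hj, hj']
  · intro k _ hk
    simp [collMat, hj, hj', Ne.symm hk]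
  · simp

end collMat

theorem elastic_collision_energy {p r : ℝ} (h : p + r ≠ 0) (x y : ℝ) :
    p * ((p - r) / (p + r) * x + (1 - (p - r) / (p + r)) * y) ^ 2
      + r * ((1 + (p - r) / (p + r)) * x + (-((p - r) / (p + r))) * y) ^ 2
    = p * x ^ 2 + r * y ^ 2 := by
  field_simp
  ring

theorem sum_mul_sq_collMat_mulVec {n i : ℕ} (hi : i + 1 < n) (m w : Fin n → ℝ)
    {S : Finset (Fin n)} (hiS : ⟨i, by omega⟩ ∈ S) (hi'S : ⟨i + 1, hi⟩ ∈ S)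
    (hm : m ⟨i, by omega⟩ + m ⟨i + 1, hi⟩ ≠ 0) :
    ∑ j ∈ S, m j * (collMat n i ((m ⟨i, by omega⟩ - m ⟨i + 1, hi⟩) /
        (m ⟨i, by omega⟩ + m ⟨i + 1, hi⟩)) *ᵥ w) j ^ 2 = ∑ j ∈ S, m j * w j ^ 2 := by
  rw [← sub_eq_zero, ← Finset.sum_sub_distrib, Finset.sum_eq_add_of_mem _ _ hiS hi'S
    (by simp [Fin.ext_iff])]
  · rw [collMat_mulVec_apply_left hi, collMat_mulVec_apply_right hi]
    linear_combination elastic_collision_energy hm (w ⟨i, by omega⟩) (w ⟨i + 1, hi⟩)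
  · intro j _ hj
    rw [collMat_mulVec_apply_of_ne _ _ (fun h => hj.1 (Fin.ext h)) (fun h => hj.2 (Fin.ext h)),
      sub_self]

section subsystemEnergy

variable {ι : Type*} (m : ι → ℝ) (S : Finset ι)

/-- Potential plus kinetic energy, with the gravitational acceleration normalised to `1`. -/
noncomputable def subsystemEnergy (x w : ι → ℝ) : ℝ :=
  ∑ j ∈ S, (m j * x j + 1 / 2 * m j * w j ^ 2)

theorem subsystemEnergy_congr_kinetic (x : ι → ℝ) {w w' : ι → ℝ}
    (h : ∑ j ∈ S, m j * w j ^ 2 = ∑ j ∈ S, m j * w' j ^ 2) :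
    subsystemEnergy m S x w = subsystemEnergy m S x w' := by
  have hhalf : ∀ u : ι → ℝ, ∑ j ∈ S, 1 / 2 * m j * u j ^ 2 = 1 / 2 * ∑ j ∈ S, m j * u j ^ 2 :=
    fun u => by rw [Finset.mul_sum]; simp only [mul_assoc]
  simp only [subsystemEnergy, Finset.sum_add_distrib, hhalf, h]

theorem tendsto_subsystemEnergy {α : Type*} {l : Filter α} {x w : α → ι → ℝ} {x₀ w₀ : ι → ℝ}
    (hx : ∀ j, Tendsto (x · j) l (𝓝 (x₀ j))) (hw : ∀ j, Tendsto (w · j) l (𝓝 (w₀ j))) :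
    Tendsto (fun s => subsystemEnergy m S (x s) (w s)) l (𝓝 (subsystemEnergy m S x₀ w₀)) :=
  tendsto_finsetSum _ fun j _ => ((hx j).const_mul _).add (((hw j).pow 2).const_mul _)

theorem hasDerivAt_subsystemEnergy_of_free_fall {x w : ℝ → ι → ℝ} {t : ℝ}
    (hx : ∀ j, HasDerivAt (x · j) (w t j) t) (hw : ∀ j, HasDerivAt (w · j) (-1) t) :
    HasDerivAt (fun s => subsystemEnergy m S (x s) (w s)) 0 t := by
  refine (HasDerivAt.fun_sum (u := S) fun j _ => ((hx j).const_mul (m j)).add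
    (((hw j).pow 2).const_mul (1 / 2 * m j))).congr_deriv (Finset.sum_eq_zero fun j _ => ?_)
  push_cast
  ring

end subsystemEnergy

namespace AccumDatum

variable {n : ℕ} {m : Fin n → ℝ} (D : AccumDatum n m)

/-- The first `a + 1` particles (0-based indices `0, …, a`). -/
def subsystem : Finset (Fin n) :=
  Finset.univ.filter fun i => i.val ≤ D.a

noncomputable def energy (t : ℝ) : ℝ :=
  subsystemEnergy m D.subsystem (D.q t) (D.v t)

theorem kinetic_energy_preserved_at_collision (k : ℕ) :
    ∑ j ∈ D.subsystem, m j * D.v (D.tc k) j ^ 2 = ∑ j ∈ D.subsystem, m j * D.vminus k j ^ 2 := by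
  have hn := D.hn
  rcases hty : D.ty k with _ | i
  · obtain ⟨-, -, hv₀, hv⟩ := D.coll_floor k hty
    refine Finset.sum_congr rfl fun j _ => ?_
    by_cases hj : j = ⟨0, by omega⟩
    · rw [hj, hv₀, neg_sq]
    · rw [hv j hj]
  · have hia : i + 1 ≤ D.a := hty ▸ D.ty_le k
    have hi : i + 1 < n := by have := D.ha; omega
    rw [(D.coll_pair k i hi hty).2.2]
    exact sum_mul_sq_collMat_mulVec hi m _ (by simp [subsystem]; omega)
      (by simp [subsystem]; omega) (by linarith [D.hm ⟨i, by omega⟩, D.hm ⟨i + 1, hi⟩])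

theorem continuousOn_energy : ContinuousOn D.energy (Ico 0 D.t0) := by
  intro t ht
  by_cases hc : t ∈ range D.tc
  · obtain ⟨k, rfl⟩ := hc
    have hq : ∀ j, ContinuousAt (D.q · j) (D.tc k) := fun j =>
      (D.q_cont j _ ht).continuousAt (Ico_mem_nhds (D.tc_pos.trans_le
        (D.tc_mono.monotone k.zero_le)) ht.2)
    refine ContinuousAt.continuousWithinAt ?_
    rw [ContinuousAt, ← nhdsLT_sup_nhdsGE, tendsto_sup]
    constructor
    · rw [energy, subsystemEnergy_congr_kinetic _ _ _ (D.kinetic_energy_preserved_at_collision k)]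
      exact tendsto_subsystemEnergy _ _ (fun j => (hq j).mono_left nhdsWithin_le_nhds) (D.v_ll k)
    · exact tendsto_subsystemEnergy _ _ (fun j => (hq j).mono_left nhdsWithin_le_nhds)
        (D.v_rc _ ht.1 ht.2)
  · exact tendsto_subsystemEnergy _ _ (fun j => D.q_cont j t ht)
      (fun j => (D.v_deriv t ht.1 ht.2 hc j).continuousWithinAt)

theorem hasDerivAt_energy {t : ℝ} (ht : t ∈ Ioo 0 D.t0) (hc : t ∉ range D.tc) :
    HasDerivAt D.energy 0 t := by
  have hI : Ico 0 D.t0 ∈ 𝓝 t := Ico_mem_nhds ht.1 ht.2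
  exact hasDerivAt_subsystemEnergy_of_free_fall _ _
    (fun j => (D.q_deriv t ht.1.le ht.2 hc j).hasDerivAt hI)
    (fun j => (D.v_deriv t ht.1.le ht.2 hc j).hasDerivAt hI)

end AccumDatum

/-- given an accumulating collision datum, the total energy of the
subsystem of the first `a + 1` particles,
`t ↦ ∑_{i ≤ a} (m_i q_i(t) + (1/2) m_i v_i(t)²)`, is constant on `[0, t₀)`. -/
theorem accum_subsystem_energy_constant (n : ℕ) (m : Fin n → ℝ) (D : AccumDatum n m) :
    ∀ t s : ℝ, 0 ≤ t → t < D.t0 → 0 ≤ s → s < D.t0 →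
      ∑ i ∈ Finset.univ.filter (fun i : Fin n => i.val ≤ D.a),
          (m i * D.q t i + (1 / 2) * m i * D.v t i ^ 2) =
        ∑ i ∈ Finset.univ.filter (fun i : Fin n => i.val ≤ D.a),
          (m i * D.q s i + (1 / 2) * m i * D.v s i ^ 2) := by
  intro t s ht₀ ht hs₀ hs
  have hts : uIcc t s ⊆ Ico 0 D.t0 := ordConnected_Ico.uIcc_subset ⟨ht₀, ht⟩ ⟨hs₀, hs⟩
  refine eq_of_hasDerivAt_zero_off_countable (f := D.energy) (countable_range D.tc)
    (D.continuousOn_energy.mono hts) fun x hx => D.hasDerivAt_energy ?_ hx.2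
  exact ⟨(le_min ht₀ hs₀).trans_lt hx.1.1, hx.1.2.trans (max_lt ht hs)⟩
end
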